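/- arXiv:2101.02775 — 3 statements merged into one kernel-verified Lean document; each statement's English description precedes it below -/
import Mathlib

section
/- Let f : ℂ → ℂ be analytic on ℂ ∖ [0,∞) and satisfy conj(f(z)) = f(conj(z)) for all z ∈ ℂ ∖ [0,∞). Then f belongs to the Stieltjes class 𝔖 if and only if both the restriction of f to the open upper half-plane ℍ₊ and the restriction of z ↦ z·f(z) to ℍ₊ are Nevanlinna functions. -/
open Complex MeasureTheory Polynomial Matrix
open scoped ComplexConjugate

noncomputable section

/-- The cut `[0, ∞)` viewed as a subset of `ℂ`. -/
def SCut : Set ℂ := {z : ℂ | 0 ≤ z.re ∧ z.im = 0}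

/-- The slit domain `ℂ \ [0, ∞)`. -/
def SDom : Set ℂ := {z : ℂ | ¬ (0 ≤ z.re ∧ z.im = 0)}

/-- The Stieltjes class `𝔖`: functions analytic on `ℂ \ [0,∞)` that are either
nonnegative real constants or satisfy (i) `Im f(z) > 0` on the upper half-plane,
(ii) `f(x) > 0` for real `x < 0`, (iii) `conj (f z) = f (conj z)`. -/
def StieltjesClass (f : ℂ → ℂ) : Prop :=
  AnalyticOnNhd ℂ f SDom ∧
  ((∃ c : ℝ, 0 ≤ c ∧ ∀ z ∈ SDom, f z = (c : ℂ)) ∨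
    ((∀ z : ℂ, 0 < z.im → 0 < (f z).im) ∧
     (∀ x : ℝ, x < 0 → ∃ r : ℝ, 0 < r ∧ f (x : ℂ) = (r : ℂ)) ∧
     (∀ z ∈ SDom, conj (f z) = f (conj z))))

/-- A Nevanlinna function on the open upper half-plane: analytic there, and either a
real constant or with strictly positive imaginary part. -/
def NevanlinnaOn (f : ℂ → ℂ) : Prop :=
  AnalyticOnNhd ℂ f {z : ℂ | 0 < z.im} ∧
  ((∃ c : ℝ, ∀ z : ℂ, 0 < z.im → f z = (c : ℂ)) ∨
    (∀ z : ℂ, 0 < z.im → 0 < (f z).im))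

open Metric Set

lemma uhp_sub : {z : ℂ | 0 < z.im} ⊆ SDom := fun z hz => by
  simp only [SDom, Set.mem_setOf_eq]; rintro ⟨-, h⟩; exact absurd h (by simpa using hz.ne')

lemma sdom_open : IsOpen SDom := by
  have : SDom = ((fun z : ℂ => z.re) ⁻¹' Set.Ici 0 ∩ (fun z : ℂ => z.im) ⁻¹' {0})ᶜ := by
    ext z; simp [SDom, Set.mem_setOf_eq, and_comm]
  rw [this]
  exact (IsClosed.inter (isClosed_Ici.preimage Complex.continuous_re)
    (isClosed_singleton.preimage Complex.continuous_im)).isOpen_compl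

lemma neg_mem_sdom {x : ℝ} (hx : x < 0) : (x : ℂ) ∈ SDom := by
  simp only [SDom, Set.mem_setOf_eq, Complex.ofReal_re, Complex.ofReal_im]
  rintro ⟨h, -⟩; linarith

lemma sdom_preconn : IsPreconnected SDom := by
  have hpc : IsPathConnected SDom := by
    refine isPathConnected_iff.mpr ⟨⟨-1, by simp [SDom]⟩, fun x hx y hy => ?_⟩
    have key : ∀ z ∈ SDom, JoinedIn SDom (-1 : ℂ) z := by
      intro z hz
      apply JoinedIn.of_segment_subset
      rw [segment_eq_image ℝ]
      rintro p ⟨t, ⟨ht0, ht1⟩, rfl⟩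
      simp only [SDom, Set.mem_setOf_eq, Complex.add_im, Complex.add_re]
      by_cases hzi : z.im = 0
      · have hzr : z.re < 0 := by
          by_contra h; exact hz ⟨le_of_not_gt h, hzi⟩
        intro ⟨h1, h2⟩
        rw [show ((1 - t) • (-1:ℂ)).re + (t • z).re = (1-t)*(-1) + t*z.re by
          simp [Complex.real_smul]] at h1
        rcases eq_or_lt_of_le ht1 with rfl | h
        · simp at h1; linarith
        · nlinarith [mul_nonpos_of_nonneg_of_nonpos ht0 hzr.le]
      · intro ⟨h1, h2⟩
        rw [show ((1 - t) • (-1:ℂ)).im + (t • z).im = t*z.im by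
          simp [Complex.real_smul]] at h2
        rcases mul_eq_zero.mp h2 with h | h
        · subst h
          simp [Complex.real_smul] at h1; linarith
        · exact hzi h
    exact ((key x hx).symm).trans (key y hy)
  exact hpc.isConnected.isPreconnected

def csqrt (w : ℂ) : ℂ := Complex.exp (Complex.log w / 2)

lemma csqrt_sq {w : ℂ} (hw : w ≠ 0) : csqrt w ^ 2 = w := by
  rw [csqrt, sq, ← Complex.exp_add]
  norm_num
  exact Complex.exp_log hw

lemma csqrt_re_pos {w : ℂ} (hw : w ∈ Complex.slitPlane) : 0 < (csqrt w).re := by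
  rw [csqrt, Complex.exp_re]
  apply mul_pos (Real.exp_pos _)
  apply Real.cos_pos_of_mem_Ioo
  constructor
  · simp only [Complex.div_im, Complex.log_im]
    have := Complex.neg_pi_lt_arg w
    norm_num
    nlinarith [Real.pi_pos]
  · simp only [Complex.div_im, Complex.log_im]
    have h1 := Complex.arg_le_pi w
    have h2 : Complex.arg w ≠ Real.pi := by
      intro h
      rcases Complex.arg_eq_pi_iff.mp h with ⟨h3, h4⟩
      rcases hw with h5 | h5
      · linarith
      · exact h5 h4
    norm_num
    nlinarith [lt_of_le_of_ne h1 h2, Real.pi_pos]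

lemma csqrt_im_pos {w : ℂ} (hw : 0 < w.im) : 0 < (csqrt w).im := by
  rw [csqrt, Complex.exp_im]
  apply mul_pos (Real.exp_pos _)
  apply Real.sin_pos_of_pos_of_lt_pi
  · simp only [Complex.div_im, Complex.log_im]
    have h0 : 0 ≤ Complex.arg w := Complex.arg_nonneg_iff.mpr hw.le
    have hne : Complex.arg w ≠ 0 := by
      intro h
      rcases Complex.arg_eq_zero_iff.mp h with ⟨-, h2⟩
      exact hw.ne' h2
    norm_num
    nlinarith [lt_of_le_of_ne h0 (Ne.symm hne)]
  · simp only [Complex.div_im, Complex.log_im]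
    have h1 := Complex.arg_le_pi w
    norm_num
    nlinarith [Real.pi_pos]

lemma csqrt_pos_real {r : ℝ} (hr : 0 < r) :
    csqrt (r : ℂ) = (Real.exp (Real.log r / 2) : ℂ) := by
  rw [csqrt, ← Complex.ofReal_log hr.le, Complex.ofReal_exp]
  norm_num [Complex.ofReal_div]

-- Möbius map ℍ → 𝔻 facts
lemma Tmap_lt_one {c w : ℂ} (hc : 0 < c.im) (hw : 0 < w.im) :
    ‖(w - c) / (w - (starRingEnd ℂ) c)‖ < 1 := by
  have hden : w - (starRingEnd ℂ) c ≠ 0 := by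
    intro h
    have : (w - (starRingEnd ℂ) c).im = 0 := by rw [h]; simp
    simp only [Complex.sub_im, Complex.conj_im] at this
    linarith
  rw [norm_div, div_lt_one (norm_pos_iff.mpr hden)]
  have h1 : Complex.normSq (w - c) < Complex.normSq (w - (starRingEnd ℂ) c) := by
    simp only [Complex.normSq_apply, Complex.sub_re, Complex.sub_im, Complex.conj_re,
      Complex.conj_im]
    nlinarith [mul_pos hw hc]
  have := Real.sqrt_lt_sqrt (Complex.normSq_nonneg _) h1
  rwa [← Complex.norm_def, ← Complex.norm_def] at this

lemma key1 (G : ℂ → ℂ) (hGd : DifferentiableOn ℂ G {z : ℂ | 0 < z.im})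
    (hGim : ∀ u : ℂ, 0 < u.im → 0 < (G u).im) {u : ℂ} (hu : 0 < u.im)
    {s : ℝ} (hs : 0 < s) (hb : G (‖u‖ * I) = s * I) :
    u.im * ‖G u‖ ≤ ‖u‖ * (G u).im := by
  set r : ℝ := ‖u‖ with hrdef
  have hune : u ≠ 0 := fun h => by simp [h] at hu
  have hr : 0 < r := norm_pos_iff.mpr hune
  set a : ℂ := (r : ℂ) * I with hadef
  set b : ℂ := (s : ℂ) * I with hbdef
  have haim : a.im = r := by simp [hadef]
  have hbim : b.im = s := by simp [hbdef]
  have hconja : (starRingEnd ℂ) a = -a := by simp [hadef]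
  have hconjb : (starRingEnd ℂ) b = -b := by simp [hbdef]
  -- the Cayley-type map S : 𝔻 → ℍ
  set S : ℂ → ℂ := fun ζ => a * (1 + ζ) / (1 - ζ) with hSdef
  have hSmaps : ∀ ζ : ℂ, ‖ζ‖ < 1 → 0 < (S ζ).im := by
    intro ζ hζ
    have hζ1 : (1 : ℂ) - ζ ≠ 0 := by
      intro h
      have : ζ = 1 := by linear_combination -h
      rw [this] at hζ; simp at hζ
    have hnum : 0 < ((1 + ζ) / (1 - ζ)).re := by
      rw [Complex.div_re, ← add_div]
      have hns : Complex.normSq ζ < 1 := by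
        rw [← Complex.sq_norm]; nlinarith [norm_nonneg ζ]
      apply div_pos
      · simp only [Complex.add_re, Complex.add_im, Complex.sub_re, Complex.sub_im,
          Complex.one_re, Complex.one_im, Complex.normSq_apply] at *
        nlinarith
      · exact Complex.normSq_pos.mpr hζ1
    have : S ζ = (r : ℂ) * I * ((1 + ζ) / (1 - ζ)) := by rw [hSdef, hadef]; ring
    rw [this]
    have : ((r : ℂ) * I * ((1 + ζ) / (1 - ζ))).im = r * ((1 + ζ) / (1 - ζ)).re := by
      simp [Complex.mul_im, Complex.mul_re]
    rw [this]
    positivity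
  -- φ : 𝔻 → 𝔻 with φ 0 = 0
  set φ : ℂ → ℂ := fun ζ => (G (S ζ) - b) / (G (S ζ) - (starRingEnd ℂ) b) with hφdef
  have hSdiff : DifferentiableOn ℂ S (ball (0 : ℂ) 1) := by
    apply DifferentiableOn.div
    · exact (differentiableOn_const _).mul ((differentiableOn_const _).add differentiableOn_id)
    · exact (differentiableOn_const _).sub differentiableOn_id
    · intro ζ hζ
      rw [mem_ball_zero_iff] at hζ
      intro h
      have : ζ = 1 := by linear_combination -h
      rw [this] at hζ; simp at hζ
  have hφdiff : DifferentiableOn ℂ φ (ball (0 : ℂ) 1) := by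
    have hGS : DifferentiableOn ℂ (fun ζ => G (S ζ)) (ball (0 : ℂ) 1) := by
      apply hGd.comp hSdiff
      intro ζ hζ
      exact hSmaps ζ (by rwa [mem_ball_zero_iff] at hζ)
    apply DifferentiableOn.div
    · exact hGS.sub (differentiableOn_const _)
    · exact hGS.sub (differentiableOn_const _)
    · intro ζ hζ
      rw [mem_ball_zero_iff] at hζ
      intro h
      have him : 0 < (G (S ζ)).im := hGim _ (hSmaps ζ hζ)
      have : (G (S ζ) - (starRingEnd ℂ) b).im = 0 := by rw [h]; simp
      rw [hconjb] at this
      simp only [Complex.sub_im, Complex.neg_im, hbim] at this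
      linarith
  have hφmaps : MapsTo φ (ball (0 : ℂ) 1) (ball (0 : ℂ) 1) := by
    intro ζ hζ
    rw [mem_ball_zero_iff] at hζ ⊢
    exact Tmap_lt_one (by simp [hbdef, hs]) (hGim _ (hSmaps ζ hζ))
  have hS0 : S 0 = a := by rw [hSdef]; simp
  have hGa : G a = b := by rw [hadef, hbdef]; exact hb
  have hφ0 : φ 0 = 0 := by rw [hφdef]; simp [hS0, hGa]
  -- apply Schwarz at ζ = T a u
  set ζ₀ : ℂ := (u - a) / (u - (starRingEnd ℂ) a) with hζ₀def
  have hζ₀ : ‖ζ₀‖ < 1 := Tmap_lt_one (by simp [hadef, hr]) hu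
  have hschwarz := Complex.norm_le_norm_of_mapsTo_ball hφdiff (hφmaps.mono_right ball_subset_closedBall) hφ0 hζ₀
  -- compute S ζ₀ = u
  have hden : u + a ≠ 0 := by
    intro h
    have : (u + a).im = 0 := by rw [h]; simp
    simp only [Complex.add_im, haim] at this
    linarith
  have hane : a ≠ 0 := by
    intro h; rw [h] at haim; simp at haim; linarith
  have hSζ₀ : S ζ₀ = u := by
    simp only [hSdef, hζ₀def, hconja]
    rw [show u - -a = u + a from by ring]
    have e1 : (1:ℂ) + (u - a)/(u + a) = 2*u/(u+a) := by field_simp; ring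
    have e2 : (1:ℂ) - (u - a)/(u + a) = 2*a/(u+a) := by field_simp; ring
    rw [e1, e2]
    have hY : 2*a/(u+a) ≠ 0 := div_ne_zero (mul_ne_zero two_ne_zero hane) hden
    rw [div_eq_iff hY]
    rw [mul_div_assoc', mul_div_assoc']
    rw [div_eq_div_iff hden hden]
    ring
  simp only [hφdef] at hschwarz
  rw [hSζ₀, hconjb] at hschwarz
  rw [hζ₀def, hconja] at hschwarz
  -- now pure computation
  have hy : 0 < (G u).im := hGim u hu
  have habs1 : ‖G u - -b‖ ≠ 0 := by
    intro h
    have h2 : G u - -b = 0 := by rwa [norm_eq_zero] at h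
    have h3 : (G u - -b).im = 0 := by rw [h2]; simp
    simp only [Complex.sub_im, Complex.neg_im, hbim] at h3
    linarith
  have habs2 : ‖u - -a‖ ≠ 0 := by
    intro h
    have h2 : u - -a = 0 := by rwa [norm_eq_zero] at h
    have h3 : (u - -a).im = 0 := by rw [h2]; simp
    simp only [Complex.sub_im, Complex.neg_im, haim] at h3
    linarith
  rw [norm_div (G u - b), norm_div (u - a)] at hschwarz
  have hp1 : (0:ℝ) < ‖G u - -b‖ := lt_of_le_of_ne (norm_nonneg _) (Ne.symm habs1)
  have hp2 : (0:ℝ) < ‖u - -a‖ := lt_of_le_of_ne (norm_nonneg _) (Ne.symm habs2)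
  rw [div_le_div_iff₀ hp1 hp2] at hschwarz
  have hsq := mul_le_mul hschwarz hschwarz (by positivity) (by positivity)
  have hns : Complex.normSq (G u - b) * Complex.normSq (u - -a) ≤
      Complex.normSq (u - a) * Complex.normSq (G u - -b) := by
    have e1 : (‖G u - b‖ * ‖u - -a‖) *
        (‖G u - b‖ * ‖u - -a‖) =
        Complex.normSq (G u - b) * Complex.normSq (u - -a) := by
      rw [← Complex.sq_norm, ← Complex.sq_norm]; ring
    have e2 : (‖u - a‖ * ‖G u - -b‖) *
        (‖u - a‖ * ‖G u - -b‖) =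
        Complex.normSq (u - a) * Complex.normSq (G u - -b) := by
      rw [← Complex.sq_norm, ← Complex.sq_norm]; ring
    rw [← e1, ← e2]; exact hsq
  have nb1 : Complex.normSq (G u - b) = (G u).re^2 + ((G u).im - s)^2 := by
    simp only [Complex.normSq_apply, Complex.sub_re, Complex.sub_im, hbdef, Complex.mul_re,
      Complex.mul_im, Complex.I_re, Complex.I_im, Complex.ofReal_re, Complex.ofReal_im]
    ring
  have nb2 : Complex.normSq (G u - -b) = (G u).re^2 + ((G u).im + s)^2 := by
    simp only [Complex.normSq_apply, Complex.sub_re, Complex.sub_im, Complex.neg_re,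
      Complex.neg_im, hbdef, Complex.mul_re,
      Complex.mul_im, Complex.I_re, Complex.I_im, Complex.ofReal_re, Complex.ofReal_im]
    ring
  have na1 : Complex.normSq (u - a) = u.re^2 + (u.im - r)^2 := by
    simp only [Complex.normSq_apply, Complex.sub_re, Complex.sub_im, hadef, Complex.mul_re,
      Complex.mul_im, Complex.I_re, Complex.I_im, Complex.ofReal_re, Complex.ofReal_im]
    ring
  have na2 : Complex.normSq (u - -a) = u.re^2 + (u.im + r)^2 := by
    simp only [Complex.normSq_apply, Complex.sub_re, Complex.sub_im, Complex.neg_re,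
      Complex.neg_im, hadef, Complex.mul_re,
      Complex.mul_im, Complex.I_re, Complex.I_im, Complex.ofReal_re, Complex.ofReal_im]
    ring
  rw [nb1, nb2, na1, na2] at hns
  have hr2 : u.re ^ 2 + u.im ^ 2 = r ^ 2 := by
    rw [hrdef, Complex.sq_norm, Complex.normSq_apply]; ring
  have hρ2 : (G u).re ^ 2 + (G u).im ^ 2 = (‖G u‖) ^ 2 := by
    rw [Complex.sq_norm, Complex.normSq_apply]; ring
  have hρnn : (0:ℝ) ≤ ‖G u‖ := norm_nonneg _
  set x := (G u).re with hxd
  set y := (G u).im with hyd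
  set X := u.re with hXd
  set Y := u.im with hYd
  set ρ := ‖G u‖ with hρd
  clear_value r a b S φ ζ₀ x y X Y ρ
  clear hschwarz hsq nb1 nb2 na1 na2 habs1 habs2 hp1 hp2 hb hGa hS0 hφ0 hSζ₀
    hζ₀ hden hane hSmaps hφmaps hφdiff hSdiff hGim hGd hconja hconjb hadef hbdef hSdef hφdef
  have e3 : X^2 + (Y + r)^2 = 2*r^2 + 2*r*Y := by linear_combination hr2
  have e4 : X^2 + (Y - r)^2 = 2*r^2 - 2*r*Y := by linear_combination hr2
  rw [e3, e4] at hns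
  have h2' : Y * (x^2 + y^2 + s^2) ≤ 2 * s * y * r := by nlinarith [hns, hr]
  have h3' : 2 * s * (Y * ρ) ≤ 2 * s * (r * y) := by
    nlinarith [h2', hρ2, mul_nonneg hu.le (sq_nonneg (ρ - s))]
  have := le_of_mul_le_mul_left h3' (by positivity : (0:ℝ) < 2 * s)
  linarith

lemma fz_slit (f : ℂ → ℂ)
    (hsym : ∀ z ∈ SDom, (starRingEnd ℂ) (f z) = f ((starRingEnd ℂ) z))
    (him : ∀ z : ℂ, 0 < z.im → 0 < (f z).im)
    (hpos : ∀ x : ℝ, x < 0 → ∃ r : ℝ, 0 < r ∧ f (x : ℂ) = (r : ℂ))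
    {u : ℂ} (hu : 0 < u.im) :
    f (u ^ 2) ∈ Complex.slitPlane ∧ f (u ^ 2) ≠ 0 ∧ u ^ 2 ∈ SDom := by
  have him2 : (u ^ 2).im = 2 * u.re * u.im := by
    rw [sq, Complex.mul_im]; ring
  rcases lt_trichotomy u.re 0 with hre | hre | hre
  · -- u² in lower half plane: f value has negative imaginary part
    have hlow : (u ^ 2).im < 0 := by rw [him2]; nlinarith
    have hmem : u ^ 2 ∈ SDom := by
      simp only [SDom, Set.mem_setOf_eq]; rintro ⟨-, h⟩; rw [h] at hlow; linarith
    have hconjmem : (starRingEnd ℂ) (u ^ 2) ∈ SDom := by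
      simp only [SDom, Set.mem_setOf_eq, Complex.conj_re, Complex.conj_im]
      rintro ⟨-, h⟩; rw [show (u^2).im = 0 from by linarith [neg_eq_zero.mp h]] at hlow; linarith
    have h1 := hsym _ hconjmem
    rw [Complex.conj_conj] at h1
    have h2 : 0 < (f ((starRingEnd ℂ) (u ^ 2))).im := by
      apply him; simp only [Complex.conj_im]; linarith
    have h3 : (f (u ^ 2)).im < 0 := by
      rw [← h1]; simp only [Complex.conj_im]; linarith
    refine ⟨Or.inr (by linarith), fun h => by rw [h] at h3; simp at h3, hmem⟩
  · -- u purely imaginary: u² is a negative real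
    have hre2 : (u ^ 2).re = -(u.im ^ 2) := by
      rw [sq, Complex.mul_re, hre]; ring
    have him0 : (u ^ 2).im = 0 := by rw [him2, hre]; ring
    have heq : u ^ 2 = ((-(u.im ^ 2) : ℝ) : ℂ) := by
      apply Complex.ext
      · rw [hre2, Complex.ofReal_re]
      · rw [him0, Complex.ofReal_im]
    have hneg : -(u.im ^ 2) < 0 := by nlinarith
    obtain ⟨r, hr, hfr⟩ := hpos _ hneg
    rw [← heq] at hfr
    refine ⟨Or.inl (by rw [hfr]; simpa using hr), ?_, ?_⟩
    · intro h
      have h0 : (0 : ℂ) = (r : ℂ) := by rw [← h, hfr]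
      exact hr.ne (by exact_mod_cast h0)
    · simp only [SDom, Set.mem_setOf_eq]; rintro ⟨h, -⟩; rw [hre2] at h; nlinarith
  · -- u² in upper half plane
    have hup : 0 < (u ^ 2).im := by rw [him2]; nlinarith
    have h3 := him _ hup
    refine ⟨Or.inr (by linarith), fun h => by rw [h] at h3; simp at h3, ?_⟩
    simp only [SDom, Set.mem_setOf_eq]; rintro ⟨-, h⟩; rw [h] at hup; linarith

lemma stieltjes_im_nonneg (f : ℂ → ℂ) (hf : AnalyticOnNhd ℂ f SDom)
    (hsym : ∀ z ∈ SDom, (starRingEnd ℂ) (f z) = f ((starRingEnd ℂ) z))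
    (him : ∀ z : ℂ, 0 < z.im → 0 < (f z).im)
    (hpos : ∀ x : ℝ, x < 0 → ∃ r : ℝ, 0 < r ∧ f (x : ℂ) = (r : ℂ))
    {z : ℂ} (hz : 0 < z.im) : 0 ≤ (z * f z).im := by
  set G : ℂ → ℂ := fun u => I * csqrt (f (u ^ 2)) with hGdef
  have hGim : ∀ u : ℂ, 0 < u.im → 0 < (G u).im := by
    intro u hu
    obtain ⟨hslit, -, -⟩ := fz_slit f hsym him hpos hu
    have : (G u).im = (csqrt (f (u ^ 2))).re := by
      rw [hGdef]; simp [Complex.mul_im]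
    rw [this]
    exact csqrt_re_pos hslit
  have hGsq : ∀ u : ℂ, 0 < u.im → (G u) ^ 2 = -f (u ^ 2) := by
    intro u hu
    obtain ⟨-, hne, -⟩ := fz_slit f hsym him hpos hu
    rw [hGdef]
    simp only [mul_pow, Complex.I_sq, csqrt_sq hne]
    ring
  have hGd : DifferentiableOn ℂ G {w : ℂ | 0 < w.im} := by
    intro u hu
    simp only [Set.mem_setOf_eq] at hu
    obtain ⟨hslit, -, hmem⟩ := fz_slit f hsym him hpos hu
    have d1 : DifferentiableAt ℂ (fun w : ℂ => f (w ^ 2)) u :=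
      ((hf _ hmem).differentiableAt).comp u (differentiableAt_pow 2)
    have d2 : DifferentiableAt ℂ (fun w : ℂ => Complex.log (f (w ^ 2))) u :=
      d1.clog hslit
    have d3 : DifferentiableAt ℂ G u := by
      rw [hGdef]
      simp only [csqrt]
      exact ((d2.div_const 2).cexp).const_mul I
    exact d3.differentiableWithinAt
  -- the square root point
  have hzne : z ≠ 0 := fun h => by rw [h] at hz; simp at hz
  have hzslit : z ∈ Complex.slitPlane := Or.inr (ne_of_gt hz)
  set u : ℂ := csqrt z with hudef
  have hX : 0 < u.re := csqrt_re_pos hzslit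
  have hY : 0 < u.im := csqrt_im_pos hz
  have hu2 : u ^ 2 = z := csqrt_sq hzne
  set v : ℂ := G u with hvdef
  have hy : 0 < v.im := hGim u hY
  have hfz : f z = -v ^ 2 := by rw [hvdef, hGsq u hY, hu2]; ring
  have hx : v.re < 0 := by
    have h1 : 0 < (f z).im := him z hz
    rw [hfz] at h1
    have : (-v ^ 2).im = -(2 * v.re * v.im) := by
      rw [sq, Complex.neg_im, Complex.mul_im]; ring
    rw [this] at h1
    nlinarith
  -- apply key1 with r = |u|
  have hrpos : (0 : ℝ) < ‖u‖ := norm_pos_iff.mpr (fun h => by rw [h] at hY; simp at hY)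
  have hbval : ∃ s : ℝ, 0 < s ∧ G ((‖u‖ : ℝ) * I) = (s : ℝ) * I := by
    have hsq2 : (((‖u‖ : ℝ) : ℂ) * I) ^ 2 = ((-(‖u‖ ^ 2) : ℝ) : ℂ) := by
      push_cast; rw [mul_pow, Complex.I_sq]; ring
    have hneg : -(‖u‖ ^ 2) < 0 := by nlinarith
    obtain ⟨ρ, hρ, hfρ⟩ := hpos _ hneg
    refine ⟨Real.exp (Real.log ρ / 2), Real.exp_pos _, ?_⟩
    rw [hGdef]
    simp only [hsq2, hfρ, csqrt_pos_real hρ]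
    ring
  obtain ⟨s, hs, hb⟩ := hbval
  have K := key1 G hGd hGim hY hs hb
  rw [← hvdef] at K
  -- deduce Im(uv) ≥ 0
  have hK2 : u.im ^ 2 * (v.re ^ 2 + v.im ^ 2) ≤ (u.re ^ 2 + u.im ^ 2) * v.im ^ 2 := by
    have h1 : (u.im * ‖v‖) * (u.im * ‖v‖) ≤
        (‖u‖ * v.im) * (‖u‖ * v.im) :=
      mul_le_mul K K (by positivity) (by positivity)
    have e1 : (‖v‖) ^ 2 = v.re ^ 2 + v.im ^ 2 := by
      rw [Complex.sq_norm, Complex.normSq_apply]; ring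
    have e2 : (‖u‖) ^ 2 = u.re ^ 2 + u.im ^ 2 := by
      rw [Complex.sq_norm, Complex.normSq_apply]; ring
    nlinarith [h1, e1, e2]
  clear_value u v
  have hImuv : 0 ≤ u.re * v.im + u.im * v.re := by
    nlinarith [hK2, mul_pos hX hy, mul_pos hY (neg_pos.mpr hx)]
  have hReuv : u.re * v.re - u.im * v.im < 0 := by
    nlinarith [mul_pos hX hy, mul_pos hY hy, mul_pos hX (neg_pos.mpr hx)]
  have hzf : z * f z = -(u * v) ^ 2 := by rw [hfz, ← hu2]; ring
  rw [hzf]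
  have : (-(u * v) ^ 2).im = -(2 * (u * v).re * (u * v).im) := by
    rw [sq, Complex.neg_im, Complex.mul_im]; ring
  rw [this, Complex.mul_re, Complex.mul_im]
  nlinarith [mul_nonneg (neg_nonneg.mpr hReuv.le) hImuv]

lemma uhp_preconn : IsPreconnected {z : ℂ | 0 < z.im} :=
  (convex_halfSpace_im_gt 0).isPreconnected

lemma uhp_open : IsOpen {z : ℂ | 0 < z.im} := isOpen_lt continuous_const Complex.continuous_im

lemma nevanlinna_dichotomy (h : ℂ → ℂ) (hana : AnalyticOnNhd ℂ h {z : ℂ | 0 < z.im})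
    (hnn : ∀ z : ℂ, 0 < z.im → 0 ≤ (h z).im) :
    (∃ c : ℝ, ∀ z : ℂ, 0 < z.im → h z = (c : ℂ)) ∨ (∀ z : ℂ, 0 < z.im → 0 < (h z).im) := by
  rcases hana.is_constant_or_isOpen uhp_preconn with ⟨w, hw⟩ | hopen
  · by_cases hwim : w.im = 0
    · left
      exact ⟨w.re, fun z hz => by rw [hw z hz]; exact Complex.ext rfl hwim⟩
    · right
      intro z hz
      rw [hw z hz]
      have h0 := hnn z hz
      rw [hw z hz] at h0
      exact lt_of_le_of_ne h0 (Ne.symm hwim)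
  · right
    intro z hz
    rcases lt_or_eq_of_le (hnn z hz) with h1 | h1
    · exact h1
    · exfalso
      have himg : IsOpen (h '' {z : ℂ | 0 < z.im}) := hopen _ subset_rfl uhp_open
      have hmem : h z ∈ h '' {z : ℂ | 0 < z.im} := ⟨z, hz, rfl⟩
      obtain ⟨ε, hε, hball⟩ := Metric.isOpen_iff.mp himg _ hmem
      have hmem2 : h z - ((ε / 2 : ℝ) : ℂ) * I ∈ ball (h z) ε := by
        rw [mem_ball, Complex.dist_eq]
        have e : h z - ((ε / 2 : ℝ) : ℂ) * I - h z = -(((ε / 2 : ℝ) : ℂ)) * I := by ring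
        rw [e]
        simp only [norm_mul, norm_neg, Complex.norm_real, Real.norm_eq_abs, Complex.norm_I, mul_one]
        rw [abs_of_pos (by linarith)]
        linarith
      obtain ⟨z', hz', hzz⟩ := hball hmem2
      have he : (h z').im = -(ε / 2) := by
        rw [hzz]
        simp only [Complex.sub_im, Complex.mul_im, Complex.I_re, Complex.I_im,
          Complex.ofReal_re, Complex.ofReal_im, ← h1]
        ring
      have := hnn z' hz'
      rw [he] at this
      linarith

lemma right_deriv_nonneg {g : ℂ → ℂ} {x₀ : ℝ} {d : ℂ} (hg : HasDerivAt g d (x₀ : ℂ))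
    (h0 : (g (x₀ : ℂ)).im = 0) (hpos : ∀ ε : ℝ, 0 < ε → 0 ≤ (g ((x₀ : ℂ) + ε * I)).im) :
    0 ≤ d.re := by
  have h1 : HasDerivAt (fun w : ℂ => (x₀ : ℂ) + w * I) I 0 := by
    simpa using ((hasDerivAt_id (0 : ℂ)).mul_const I).const_add (x₀ : ℂ)
  have hg' : HasDerivAt g d ((x₀ : ℂ) + (0 : ℂ) * I) := by simpa using hg
  have h2 : HasDerivAt (fun w : ℂ => g ((x₀ : ℂ) + w * I)) (d * I) 0 := by
    exact HasDerivAt.comp (0 : ℂ) hg' h1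
  have h3 : HasDerivAt (fun w : ℂ => -I * g ((x₀ : ℂ) + w * I)) (-I * (d * I)) 0 :=
    h2.const_mul (-I)
  have hval : -I * (d * I) = d := by
    rw [show -I * (d * I) = -(d * (I * I)) from by ring, Complex.I_mul_I]; ring
  rw [hval] at h3
  have h3' : HasDerivAt (fun w : ℂ => -I * g ((x₀ : ℂ) + w * I)) d ((0 : ℝ) : ℂ) := by
    simpa using h3
  have h5 := h3'.real_of_complex
  have hfeq : (fun ε : ℝ => (-I * g ((x₀ : ℂ) + (ε : ℂ) * I)).re) =
      fun ε : ℝ => (g ((x₀ : ℂ) + (ε : ℂ) * I)).im := by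
    funext ε
    simp [Complex.mul_re]
  rw [hfeq] at h5
  set φ : ℝ → ℝ := fun ε : ℝ => (g ((x₀ : ℂ) + (ε : ℂ) * I)).im with hφdef
  have hφ0 : φ 0 = 0 := by
    rw [hφdef]; simpa using h0
  have h6 : HasDerivWithinAt φ d.re (Set.Ioi (0 : ℝ)) 0 := h5.hasDerivWithinAt
  rw [hasDerivWithinAt_iff_tendsto_slope] at h6
  have hIoi : Set.Ioi (0 : ℝ) \ {0} = Set.Ioi 0 := by
    ext t; simp only [Set.mem_diff, Set.mem_Ioi, Set.mem_singleton_iff]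
    exact ⟨fun ⟨a, _⟩ => a, fun a => ⟨a, ne_of_gt a⟩⟩
  rw [hIoi] at h6
  refine ge_of_tendsto h6 ?_
  filter_upwards [self_mem_nhdsWithin] with t ht
  rw [slope_def_field, hφ0, sub_zero, sub_zero]
  have ht' : (0 : ℝ) < t := ht
  exact div_nonneg (hpos t ht') ht'.le

lemma reverse_pos (f : ℂ → ℂ) (hf : AnalyticOnNhd ℂ f SDom)
    (hsym : ∀ z ∈ SDom, (starRingEnd ℂ) (f z) = f ((starRingEnd ℂ) z))
    (him : ∀ z : ℂ, 0 < z.im → 0 < (f z).im)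
    (hzf : ∀ z : ℂ, 0 < z.im → 0 < (z * f z).im) :
    ∀ x : ℝ, x < 0 → ∃ r : ℝ, 0 < r ∧ f (x : ℂ) = (r : ℂ) := by
  have hreal : ∀ x : ℝ, x < 0 → (f (x : ℂ)).im = 0 := by
    intro x hx
    have h := hsym _ (neg_mem_sdom hx)
    rw [Complex.conj_ofReal] at h
    have h2 := congrArg Complex.im h
    rw [Complex.conj_im] at h2
    linarith
  have hder : ∀ x : ℝ, x < 0 → HasDerivAt f (deriv f (x : ℂ)) (x : ℂ) := fun x hx =>
    ((hf _ (neg_mem_sdom hx)).differentiableAt).hasDerivAt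
  have hd1 : ∀ x : ℝ, x < 0 → 0 ≤ (deriv f (x : ℂ)).re := by
    intro x hx
    apply right_deriv_nonneg (hder x hx) (hreal x hx)
    intro ε hε
    exact (him _ (by simp [hε])).le
  have hd2 : ∀ x : ℝ, x < 0 → 0 ≤ (f (x : ℂ)).re + x * (deriv f (x : ℂ)).re := by
    intro x hx
    have hD : HasDerivAt (fun z : ℂ => z * f z)
        ((1 : ℂ) * f (x : ℂ) + (x : ℂ) * deriv f (x : ℂ)) (x : ℂ) :=
      (hasDerivAt_id ((x : ℂ))).mul (hder x hx)
    have h0 : (((x : ℂ)) * f (x : ℂ)).im = 0 := by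
      rw [Complex.mul_im, Complex.ofReal_re, Complex.ofReal_im, hreal x hx]; ring
    have := right_deriv_nonneg hD h0 (fun ε hε => (hzf _ (by simp [hε])).le)
    simpa [Complex.add_re, Complex.mul_re] using this
  set F : ℝ → ℝ := fun t : ℝ => (f (t : ℂ)).re with hFdef
  have hF : ∀ x : ℝ, x < 0 → HasDerivAt F ((deriv f (x : ℂ)).re) x := fun x hx =>
    (hder x hx).real_of_complex
  have hFnn : ∀ x : ℝ, x < 0 → 0 ≤ F x := by
    intro x hx
    have := hd2 x hx
    nlinarith [mul_nonneg (neg_nonneg.mpr hx.le) (hd1 x hx)]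
  intro x₀ hx₀
  rcases lt_or_ge 0 (F x₀) with hpos | hneg
  · refine ⟨F x₀, hpos, ?_⟩
    apply Complex.ext
    · rw [Complex.ofReal_re]
    · rw [Complex.ofReal_im]; exact hreal x₀ hx₀
  · exfalso
    have hF0 : F x₀ = 0 := le_antisymm hneg (hFnn x₀ hx₀)
    have hmono : MonotoneOn F (Set.Iio (0 : ℝ)) := by
      apply monotoneOn_of_deriv_nonneg (convex_Iio 0)
      · exact fun x hx => ((hF x hx).continuousAt).continuousWithinAt
      · intro x hx
        rw [interior_Iio] at hx
        exact ((hF x hx).differentiableAt).differentiableWithinAt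
      · intro x hx
        rw [interior_Iio] at hx
        rw [(hF x hx).deriv]
        exact hd1 x hx
    have hzero : ∀ t : ℝ, t < x₀ → f (t : ℂ) = 0 := by
      intro t ht
      have h1 : F t ≤ F x₀ := hmono (by simp only [Set.mem_Iio]; linarith)
        (Set.mem_Iio.mpr hx₀) ht.le
      have h2 : F t = 0 := le_antisymm (hF0 ▸ h1) (hFnn t (by linarith))
      apply Complex.ext
      · simpa using h2
      · simpa using hreal t (by linarith)
    have htend : Filter.Tendsto (fun n : ℕ => ((x₀ - 1 / (n + 1) : ℝ) : ℂ)) Filter.atTop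
        (nhdsWithin (x₀ : ℂ) {(x₀ : ℂ)}ᶜ) := by
      apply tendsto_nhdsWithin_of_tendsto_nhds_of_eventually_within
      · have hr : Filter.Tendsto (fun n : ℕ => (x₀ - 1 / (n + 1) : ℝ)) Filter.atTop (nhds x₀) := by
          have := tendsto_one_div_add_atTop_nhds_zero_nat (𝕜 := ℝ)
          have h2 := Filter.Tendsto.const_sub x₀ this
          simpa using h2
        exact (Complex.continuous_ofReal.tendsto x₀).comp hr
      · apply Filter.Eventually.of_forall
        intro n
        simp only [Set.mem_compl_iff, Set.mem_singleton_iff]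
        intro h
        have h2 : (x₀ - 1 / (n + 1) : ℝ) = x₀ := by exact_mod_cast h
        have : (0:ℝ) < 1 / (n + 1) := by positivity
        linarith
    have hfreq : ∃ᶠ z in nhdsWithin (x₀ : ℂ) {(x₀ : ℂ)}ᶜ, f z = 0 := by
      apply htend.frequently
      apply Filter.Frequently.of_forall
      intro n
      apply hzero
      have : (0:ℝ) < 1 / (n + 1) := by positivity
      linarith
    have heq := hf.eqOn_zero_of_preconnected_of_frequently_eq_zero sdom_preconn
      (neg_mem_sdom hx₀) hfreq
    have hI : (I : ℂ) ∈ SDom := by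
      simp only [SDom, Set.mem_setOf_eq, Complex.I_re, Complex.I_im]
      rintro ⟨-, h⟩; exact one_ne_zero h
    have h1 := him I (by simp)
    rw [heq hI] at h1
    simp at h1

lemma hI_uhp : (I : ℂ) ∈ {z : ℂ | 0 < z.im} := by simp [Complex.I_im]

lemma hI_sdom : (I : ℂ) ∈ SDom := uhp_sub hI_uhp

theorem statement0' (f : ℂ → ℂ)
    (hf : AnalyticOnNhd ℂ f SDom)
    (hsym : ∀ z ∈ SDom, (starRingEnd ℂ) (f z) = f ((starRingEnd ℂ) z)) :
    StieltjesClass f ↔ NevanlinnaOn f ∧ NevanlinnaOn (fun z => z * f z) := by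
  have hfu : AnalyticOnNhd ℂ f {z : ℂ | 0 < z.im} := hf.mono uhp_sub
  have hzfu : AnalyticOnNhd ℂ (fun z : ℂ => z * f z) {z : ℂ | 0 < z.im} :=
    analyticOnNhd_id.mul hfu
  constructor
  · rintro ⟨hfa, hcase⟩
    rcases hcase with ⟨c, hc0, hc⟩ | ⟨him, hpos, hsym'⟩
    · refine ⟨⟨hfu, Or.inl ⟨c, fun z hz => hc z (uhp_sub hz)⟩⟩, ⟨hzfu, ?_⟩⟩
      rcases eq_or_lt_of_le hc0 with hc0' | hc0'
      · left
        refine ⟨0, fun z hz => ?_⟩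
        show z * f z = ((0 : ℝ) : ℂ)
        rw [hc z (uhp_sub hz), ← hc0']
        simp
      · right
        intro z hz
        show 0 < (z * f z).im
        rw [hc z (uhp_sub hz)]
        simp only [Complex.mul_im, Complex.ofReal_re, Complex.ofReal_im]
        nlinarith [mul_pos hz hc0']
    · refine ⟨⟨hfu, Or.inr him⟩, ⟨hzfu, ?_⟩⟩
      exact nevanlinna_dichotomy _ hzfu
        (fun z hz => stieltjes_im_nonneg f hf hsym' him hpos hz)
  · rintro ⟨⟨hfa1, hNf⟩, ⟨hfa2, hNzf⟩⟩
    refine ⟨hf, ?_⟩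
    rcases hNf with ⟨c, hc⟩ | him
    · left
      have hceq : Set.EqOn f (fun _ => (c : ℂ)) SDom := by
        apply hf.eqOn_of_preconnected_of_eventuallyEq analyticOnNhd_const sdom_preconn hI_sdom
        exact Filter.eventuallyEq_of_mem (uhp_open.mem_nhds hI_uhp) (fun z hz => hc z hz)
      have hc0 : 0 ≤ c := by
        rcases hNzf with ⟨c', hc'⟩ | hpos'
        · have h1 := hc' I hI_uhp
          have h2 := hc' (2 * I) (by simp)
          simp only at h1 h2
          rw [hc I hI_uhp] at h1
          rw [hc (2 * I) (by simp)] at h2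
          have h3 : I * (c : ℂ) = 2 * I * (c : ℂ) := by rw [h1, h2]
          have h4 : I * (c : ℂ) = 0 := by
            have h5 : I * (c : ℂ) - 2 * I * (c : ℂ) = 0 := by rw [← h3]; ring
            have h6 : -(I * (c : ℂ)) = 0 := by rw [← h5]; ring
            linear_combination -h6
          have h7 : (c : ℂ) = 0 := by
            rcases mul_eq_zero.mp h4 with h | h
            · exact absurd h I_ne_zero
            · exact h
          have : c = 0 := by exact_mod_cast h7
          linarith
        · have h1 := hpos' I hI_uhp
          simp only at h1
          rw [hc I hI_uhp] at h1
          simp only [Complex.mul_im, Complex.I_re, Complex.I_im, Complex.ofReal_re,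
            Complex.ofReal_im, zero_mul, one_mul, zero_add] at h1
          linarith
      exact ⟨c, hc0, fun z hz => hceq hz⟩
    · right
      refine ⟨him, ?_, hsym⟩
      rcases hNzf with ⟨c', hc'⟩ | hpos'
      · -- z * f z constant on the upper half-plane, hence on SDom
        have hg : AnalyticOnNhd ℂ (fun z : ℂ => z * f z) SDom := analyticOnNhd_id.mul hf
        have hgeq : Set.EqOn (fun z : ℂ => z * f z) (fun _ => ((c' : ℝ) : ℂ)) SDom := by
          apply hg.eqOn_of_preconnected_of_eventuallyEq analyticOnNhd_const sdom_preconn hI_sdom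
          exact Filter.eventuallyEq_of_mem (uhp_open.mem_nhds hI_uhp) (fun z hz => hc' z hz)
        have hcneg : c' < 0 := by
          have h1 := him I hI_uhp
          have h2 := hgeq hI_sdom
          simp only at h2
          have h3 : f I = -(c' : ℂ) * I := by
            have h4 : I * f I = (c' : ℂ) := h2
            have : I * (-(c' : ℂ) * I) = (c' : ℂ) := by
              rw [show I * (-(c' : ℂ) * I) = -(c' : ℂ) * (I * I) from by ring, Complex.I_mul_I]
              ring
            have h5 : I * f I = I * (-(c' : ℂ) * I) := by rw [h4, this]
            exact mul_left_cancel₀ I_ne_zero h5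
          rw [h3] at h1
          simp only [Complex.mul_im, Complex.neg_re, Complex.neg_im, Complex.I_re, Complex.I_im,
            Complex.ofReal_re, Complex.ofReal_im, mul_zero, mul_one] at h1
          linarith
        intro x hx
        refine ⟨c' / x, div_pos_of_neg_of_neg hcneg hx, ?_⟩
        have h2 := hgeq (neg_mem_sdom hx)
        simp only at h2
        have hxne : (x : ℂ) ≠ 0 := by exact_mod_cast hx.ne
        rw [show ((c' / x : ℝ) : ℂ) = (c' : ℝ) / (x : ℝ) from by push_cast; ring]
        field_simp
        rw [← h2]
        ring
      · exact reverse_pos f hf hsym him (fun z hz => hpos' z hz)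

theorem statement0 (f : ℂ → ℂ)
    (hf : AnalyticOnNhd ℂ f SDom)
    (hsym : ∀ z ∈ SDom, conj (f z) = f (conj z)) :
    StieltjesClass f ↔ NevanlinnaOn f ∧ NevanlinnaOn (fun z => z * f z) :=
  statement0' f hf hsym
end
end

section
/- If f belongs to the Stieltjes class 𝔖 and f is not the zero constant function, then f(z) ≠ 0 for every z ∈ ℂ ∖ [0,∞), and the function g defined by g(z) = −1/(z·f(z)) on ℂ ∖ [0,∞) also belongs to 𝔖. -/
open Complex MeasureTheory Polynomial Matrix
open scoped ComplexConjugate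

noncomputable section

section AuxLemmas

open Metric Set


lemma normSq_mob (a u : ℂ) : Complex.normSq (1 + conj a * u) - Complex.normSq (u + a)
    = (1 - Complex.normSq a) * (1 - Complex.normSq u) := by
  simp only [Complex.normSq_apply, Complex.add_re, Complex.add_im, Complex.mul_re, Complex.mul_im,
    Complex.conj_re, Complex.conj_im, Complex.one_re, Complex.one_im]
  ring

lemma norm_lt_of_normSq_lt {x y : ℂ} (h : Complex.normSq x < Complex.normSq y) : ‖x‖ < ‖y‖ := by
  rw [Complex.norm_def, Complex.norm_def]
  exact Real.sqrt_lt_sqrt (Complex.normSq_nonneg _) h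

lemma normSq_lt_one {a : ℂ} (ha : ‖a‖ < 1) : Complex.normSq a < 1 := by
  rw [Complex.normSq_eq_norm_sq]
  nlinarith [norm_nonneg a]

lemma mob_den_ne {a u : ℂ} (ha : ‖a‖ < 1) (hu : ‖u‖ < 1) : (1 + conj a * u) ≠ 0 := by
  intro h0
  have h1 : conj a * u = -1 := by linear_combination h0
  have : ‖conj a * u‖ < 1 := by
    rw [norm_mul, RCLike.norm_conj]
    nlinarith [norm_nonneg a, norm_nonneg u]
  rw [h1] at this; simp at this

lemma mob_mem {a u : ℂ} (ha : ‖a‖ < 1) (hu : ‖u‖ < 1) :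
    ‖(u + a) / (1 + conj a * u)‖ < 1 := by
  rw [norm_div]
  have hd := mob_den_ne ha hu
  have key : Complex.normSq (u + a) < Complex.normSq (1 + conj a * u) := by
    have := normSq_mob a u
    nlinarith [normSq_lt_one ha, normSq_lt_one hu]
  exact div_lt_one (norm_pos_iff.mpr hd) |>.mpr (norm_lt_of_normSq_lt key) |>.trans_le le_rfl
lemma schwarz_pick_conj {G : ℂ → ℂ} (hd : DifferentiableOn ℂ G (ball 0 1))
    (hm : MapsTo G (ball 0 1) (ball 0 1))
    {b : ℂ} (hb : b ∈ ball 0 1) (hs : G (conj b) = conj (G b)) :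
    ‖G b - conj (G b)‖ * ‖1 - b ^ 2‖ ≤ ‖b - conj b‖ * ‖1 - G b ^ 2‖ := by
  have hb1 : ‖b‖ < 1 := by simpa [mem_ball, dist_eq_norm] using hb
  set a : ℂ := conj b with ha_def
  have ha1 : ‖a‖ < 1 := by simpa [ha_def] using hb1
  have hamem : a ∈ ball (0:ℂ) 1 := by simpa [mem_ball, dist_eq_norm] using ha1
  set x : ℂ := G b with hx_def
  have hx1 : ‖x‖ < 1 := by simpa [mem_ball, dist_eq_norm] using hm hb
  have hGa : G a = conj x := hs
  -- Möbius maps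
  set M : ℂ → ℂ := fun u => (u + a) / (1 + conj a * u) with hM
  set N : ℂ → ℂ := fun v => (v + -conj x) / (1 + conj (-conj x) * v) with hN
  set K : ℂ → ℂ := fun u => N (G (M u)) with hK
  have hMball : ∀ u ∈ ball (0:ℂ) 1, M u ∈ ball (0:ℂ) 1 := fun u hu => by
    simpa [mem_ball, dist_eq_norm, hM] using mob_mem ha1 (by simpa [mem_ball, dist_eq_norm] using hu)
  have hNball : ∀ v ∈ ball (0:ℂ) 1, N v ∈ ball (0:ℂ) 1 := fun v hv => by
    have : ‖-conj x‖ < 1 := by simpa using hx1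
    simpa [mem_ball, dist_eq_norm, hN] using mob_mem this (by simpa [mem_ball, dist_eq_norm] using hv)
  have hKball : MapsTo K (ball 0 1) (ball 0 1) := fun u hu =>
    hNball _ (hm (hMball u hu))
  have hMdiff : DifferentiableOn ℂ M (ball 0 1) := by
    apply DifferentiableOn.div
    · fun_prop
    · fun_prop
    · intro u hu
      exact mob_den_ne ha1 (by simpa [mem_ball, dist_eq_norm] using hu)
  have hNdiff : DifferentiableOn ℂ N (ball 0 1) := by
    apply DifferentiableOn.div
    · fun_prop
    · fun_prop
    · intro v hv
      have : ‖-conj x‖ < 1 := by simpa using hx1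
      exact mob_den_ne this (by simpa [mem_ball, dist_eq_norm] using hv)
  have hKdiff : DifferentiableOn ℂ K (ball 0 1) := by
    exact (hNdiff.comp (hd.comp hMdiff hMball) (fun u hu => hm (hMball u hu)))
  have hK0 : K 0 = 0 := by
    have hM0 : M 0 = a := by simp [hM]
    simp only [hK, hM0, hGa, hN]
    field_simp
    simp
  -- the test point
  set u₀ : ℂ := (b + -a) / (1 + conj (-a) * b) with hu₀def
  have hu₀ : u₀ ∈ ball (0:ℂ) 1 := by
    have : ‖-a‖ < 1 := by simpa using ha1
    simpa [mem_ball, dist_eq_norm, hu₀def] using mob_mem this hb1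
  have haa : (1 : ℂ) + conj (-a) * b ≠ 0 := by
    intro h0
    have h1 : conj (-a) * b = -1 := by linear_combination h0
    have hn : ‖conj (-a) * b‖ < 1 := by
      rw [norm_mul, RCLike.norm_conj, norm_neg]
      nlinarith [norm_nonneg a, norm_nonneg b]
    rw [h1] at hn; simp at hn
  have hu₀1 : ‖u₀‖ < 1 := by simpa [mem_ball, dist_eq_norm] using hu₀
  have haa' : (1 : ℂ) - b * conj a ≠ 0 := by
    intro h0
    apply haa
    rw [map_neg]
    linear_combination h0
  have hMu₀ : M u₀ = b := by
    have hden : (1 : ℂ) + conj a * u₀ ≠ 0 := mob_den_ne ha1 hu₀1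
    rw [hM]
    rw [div_eq_iff hden, hu₀def]
    have haa'' : (1:ℂ) + -conj a * b ≠ 0 := by rwa [map_neg] at haa
    rw [map_neg]
    field_simp
    linear_combination (b - a) * mul_inv_cancel₀ haa'
  have hcore := by
    have h := Complex.dist_le_dist_of_mapsTo_ball hKdiff (by rw [hK0]; exact hKball.mono_right ball_subset_closedBall) hu₀
    rw [hK0] at h
    exact h
  have hx2 : (1:ℂ) - x^2 ≠ 0 := by
    intro h0
    have : x ^ 2 = 1 := by linear_combination -h0
    have : ‖x ^ 2‖ = 1 := by rw [this]; simp
    rw [norm_pow] at this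
    nlinarith [norm_nonneg x]
  have hb2 : (1:ℂ) - b^2 ≠ 0 := by
    intro h0
    have : b ^ 2 = 1 := by linear_combination -h0
    have : ‖b ^ 2‖ = 1 := by rw [this]; simp
    rw [norm_pow] at this
    nlinarith [norm_nonneg b]
  have e1 : x + -conj x = x - conj x := by ring
  have e2 : (1 : ℂ) + conj (-conj x) * x = 1 - x^2 := by rw [map_neg, Complex.conj_conj]; ring
  have hKu : K u₀ = (x - conj x)/(1 - x^2) := by
    simp only [hK, hMu₀, ← hx_def, hN, e1, e2]
  have e3 : b + -a = b - conj b := by rw [ha_def]; ring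
  have e4 : (1 : ℂ) + conj (-a) * b = 1 - b^2 := by rw [ha_def, map_neg, Complex.conj_conj]; ring
  have hu₀eq : u₀ = (b - conj b)/(1 - b^2) := by
    rw [hu₀def, e3, e4]
  rw [dist_zero_right, dist_zero_right, hKu, hu₀eq, norm_div, norm_div,
    div_le_div_iff₀ (norm_pos_iff.mpr hx2) (norm_pos_iff.mpr hb2)] at hcore
  exact hcore
lemma re_pos_add_one_ne {v : ℂ} (hv : 0 < v.re) : v + 1 ≠ 0 := by
  intro h
  have := congrArg Complex.re h
  simp at this
  linarith

lemma cay_mem {v : ℂ} (hv : 0 < v.re) : ‖(v - 1) / (v + 1)‖ < 1 := by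
  rw [norm_div]
  have h1 : v + 1 ≠ 0 := re_pos_add_one_ne hv
  apply (div_lt_one (norm_pos_iff.mpr h1)).mpr
  apply norm_lt_of_normSq_lt
  simp only [Complex.normSq_apply, Complex.sub_re, Complex.sub_im, Complex.add_re,
    Complex.add_im, Complex.one_re, Complex.one_im]
  nlinarith

lemma cinv_re {u : ℂ} (hu : ‖u‖ < 1) : 0 < ((1 + u) / (1 - u)).re := by
  have h1 : (1 : ℂ) - u ≠ 0 := by
    intro h
    have : u = 1 := by linear_combination -h
    rw [this] at hu; simp at hu
  have hsq : Complex.normSq u < 1 := by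
    rw [Complex.normSq_eq_norm_sq]; nlinarith [norm_nonneg u]
  rw [Complex.div_re, ← add_div]
  have e : (1 + u).re * (1 - u).re + (1 + u).im * (1 - u).im = 1 - Complex.normSq u := by
    simp only [Complex.normSq_apply, Complex.add_re, Complex.add_im, Complex.sub_re,
      Complex.sub_im, Complex.one_re, Complex.one_im]
    ring
  rw [e]
  have : 0 < Complex.normSq (1 - u) := Complex.normSq_pos.mpr h1
  exact div_pos (by linarith) this

lemma cinv_cay {v : ℂ} (hv : 0 < v.re) : (1 + (v - 1) / (v + 1)) / (1 - (v - 1) / (v + 1)) = v := by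
  have h1 : v + 1 ≠ 0 := re_pos_add_one_ne hv
  have e : (1 : ℂ) - (v - 1) / (v + 1) = 2 / (v + 1) := by
    field_simp
    ring
  rw [e]
  have h2 : (2 : ℂ) / (v + 1) ≠ 0 := div_ne_zero two_ne_zero h1
  rw [div_eq_iff h2]
  field_simp
  ring

lemma cay_conj (v : ℂ) : (conj v - 1) / (conj v + 1) = conj ((v - 1) / (v + 1)) := by
  simp [map_div₀]

lemma norm_sub_conj (v : ℂ) : ‖v - conj v‖ = 2 * |v.im| := by
  rw [Complex.sub_conj]
  simp [abs_mul]

lemma norm_conj_add_one (v : ℂ) : ‖conj v + 1‖ = ‖v + 1‖ := by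
  have : conj v + 1 = conj (v + 1) := by simp
  rw [this, RCLike.norm_conj]

lemma cay_sub_conj {v : ℂ} (hv : 0 < v.re) :
    (v - 1) / (v + 1) - conj ((v - 1) / (v + 1)) = 2 * (v - conj v) / ((v + 1) * (conj v + 1)) := by
  have h1 : v + 1 ≠ 0 := re_pos_add_one_ne hv
  have h2 : conj v + 1 ≠ 0 := by
    intro h
    have : conj (v + 1) = 0 := by rw [map_add, _root_.map_one]; exact h
    exact h1 (by simpa using congrArg conj this)
  rw [← cay_conj]
  field_simp
  ring

lemma cay_one_sub_sq {v : ℂ} (hv : 0 < v.re) :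
    1 - ((v - 1) / (v + 1)) ^ 2 = 4 * v / ((v + 1) ^ 2) := by
  have h1 : v + 1 ≠ 0 := re_pos_add_one_ne hv
  field_simp
  ring

lemma halfplane_sp {F : ℂ → ℂ}
    (hd : ∀ w : ℂ, 0 < w.re → AnalyticAt ℂ F w)
    (hm : ∀ w : ℂ, 0 < w.re → 0 < (F w).re)
    {w : ℂ} (hw : 0 < w.re) (hsym : F (conj w) = conj (F w)) :
    |(F w).im| * ‖w‖ ≤ |w.im| * ‖F w‖ := by
  set G : ℂ → ℂ := fun u => (F ((1 + u) / (1 - u)) - 1) / (F ((1 + u) / (1 - u)) + 1) with hG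
  have hball : ∀ u : ℂ, u ∈ ball (0:ℂ) 1 → ‖u‖ < 1 := fun u hu => by
    simpa [mem_ball, dist_eq_norm] using hu
  have hGd : DifferentiableOn ℂ G (ball 0 1) := by
    intro u hu
    have hu1 : ‖u‖ < 1 := hball u hu
    have h1 : (1 : ℂ) - u ≠ 0 := by
      intro h
      have : u = 1 := by linear_combination -h
      rw [this] at hu1; simp at hu1
    have hCinvd : DifferentiableAt ℂ (fun u : ℂ => (1 + u) / (1 - u)) u := by
      apply DifferentiableAt.div (by fun_prop) (by fun_prop) h1
    have hFd : DifferentiableAt ℂ F ((1 + u) / (1 - u)) := (hd _ (cinv_re hu1)).differentiableAt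
    have hcomp : DifferentiableAt ℂ (fun u : ℂ => F ((1 + u) / (1 - u))) u := hFd.comp u hCinvd
    exact ((hcomp.sub_const 1).div (hcomp.add_const 1)
      (re_pos_add_one_ne (hm _ (cinv_re hu1)))).differentiableWithinAt
  have hGm : MapsTo G (ball 0 1) (ball 0 1) := by
    intro u hu
    have hu1 : ‖u‖ < 1 := hball u hu
    simpa [mem_ball, dist_eq_norm, hG] using cay_mem (hm _ (cinv_re hu1))
  set b : ℂ := (w - 1) / (w + 1) with hb_def
  have hb : b ∈ ball (0:ℂ) 1 := by
    simpa [mem_ball, dist_eq_norm, hb_def] using cay_mem hw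
  have hGb : G b = (F w - 1) / (F w + 1) := by
    rw [hG]
    simp only [hb_def, cinv_cay hw]
  have hwc : 0 < (conj w).re := by simpa using hw
  have hGs : G (conj b) = conj (G b) := by
    rw [hGb, hG]
    simp only [hb_def, cay_conj w]
    rw [show conj ((w - 1) / (w + 1)) = (conj w - 1) / (conj w + 1) from (cay_conj w).symm]
    rw [cinv_cay hwc, hsym]
    rw [map_div₀, map_sub, map_add, _root_.map_one]
  have key := schwarz_pick_conj hGd hGm hb hGs
  rw [hGb] at key
  -- rewrite the four norms
  have hFw := hm w hw
  have hwne : w + 1 ≠ 0 := re_pos_add_one_ne hw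
  have hFne : F w + 1 ≠ 0 := re_pos_add_one_ne hFw
  rw [cay_sub_conj hFw, cay_one_sub_sq hFw, cay_sub_conj hw, cay_one_sub_sq hw] at key
  rw [norm_div, norm_div, norm_div, norm_div, norm_mul, norm_mul, norm_mul, norm_mul,
    norm_mul, norm_mul, norm_sub_conj, norm_sub_conj, norm_conj_add_one, norm_conj_add_one,
    norm_pow, norm_pow] at key
  have h2 : ‖(2:ℂ)‖ = 2 := by simp
  have h4 : ‖(4:ℂ)‖ = 4 := by
    rw [show (4:ℂ) = ((4:ℝ):ℂ) by norm_num, Complex.norm_real]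
    norm_num
  rw [h2, h4] at key
  set nw : ℝ := ‖w + 1‖ with hnw
  set nF : ℝ := ‖F w + 1‖ with hnF
  have hnwp : 0 < nw := norm_pos_iff.mpr hwne
  have hnFp : 0 < nF := norm_pos_iff.mpr hFne
  rw [div_mul_div_comm, div_mul_div_comm, div_le_div_iff₀ (by positivity) (by positivity)] at key
  have key2 : (|(F w).im| * ‖w‖) * (16 * (nw^2 * nF^2)) ≤ (|w.im| * ‖F w‖) * (16 * (nw^2 * nF^2)) := by
    nlinarith [key]
  exact le_of_mul_le_mul_right key2 (by positivity)

lemma sqrt_re_pos {x : ℂ} (hx : x ∈ slitPlane) : 0 < (x ^ (2⁻¹ : ℂ)).re := by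
  rw [Complex.cpow_inv_two_re]
  apply Real.sqrt_pos.mpr
  have h1 : |x.re| ≤ ‖x‖ := Complex.abs_re_le_norm x
  rcases mem_slitPlane_iff.mp hx with h | h
  · have := abs_nonneg x.re
    have := le_abs_self x.re
    nlinarith [neg_abs_le x.re]
  · have h2 : |x.re| < ‖x‖ := Complex.abs_re_lt_norm.mpr h
    nlinarith [neg_abs_le x.re]

lemma sqrt_mul_self {x : ℂ} (hx : x ≠ 0) : x ^ (2⁻¹ : ℂ) * x ^ (2⁻¹ : ℂ) = x := by
  rw [← Complex.cpow_add _ _ hx]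
  norm_num

lemma sqrt_conj {x : ℂ} (hx : x ∈ slitPlane) :
    conj x ^ (2⁻¹ : ℂ) = conj (x ^ (2⁻¹ : ℂ)) := by
  have := Complex.conj_cpow x (2⁻¹ : ℂ) (Complex.slitPlane_arg_ne_pi hx)
  have e : (starRingEnd ℂ) (2⁻¹ : ℂ) = (2⁻¹ : ℂ) := by
    rw [map_inv₀, map_ofNat]
  rw [e] at this
  exact this

lemma neg_one_div_im (w : ℂ) : (-1 / w).im = w.im / Complex.normSq w := by
  rw [neg_div, one_div, Complex.neg_im, Complex.inv_im]
  ring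


lemma mem_SDom_iff {z : ℂ} : z ∈ SDom ↔ z.re < 0 ∨ z.im ≠ 0 := by
  simp only [SDom, Set.mem_setOf_eq, not_and_or, not_le]

lemma zero_not_mem_SDom : (0 : ℂ) ∉ SDom := by
  rw [mem_SDom_iff]; simp

lemma conj_mem_SDom {z : ℂ} (hz : z ∈ SDom) : conj z ∈ SDom := by
  rw [mem_SDom_iff] at hz ⊢
  simpa using hz

lemma mem_SDom_of_im_pos {z : ℂ} (hz : 0 < z.im) : z ∈ SDom :=
  mem_SDom_iff.mpr (Or.inr hz.ne')

lemma neg_sq_mem_SDom {v : ℂ} (hv : 0 < v.re) : -(v ^ 2) ∈ SDom := by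
  rw [mem_SDom_iff]
  by_cases h : v.im = 0
  · left
    rw [sq]
    simp only [Complex.neg_re, Complex.mul_re, h]
    nlinarith
  · right
    rw [sq]
    simp only [Complex.neg_im, Complex.mul_im]
    intro h0
    apply h
    have h1 : v.re * v.im = 0 := by
      have := neg_eq_zero.mp h0
      linarith
    rcases mul_eq_zero.mp h1 with h2 | h2
    · exact absurd h2 (ne_of_gt hv)
    · exact h2

end AuxLemmas

section CaseB

open Metric Set

variable {f : ℂ → ℂ}

lemma fslit (hA : AnalyticOnNhd ℂ f SDom)
    (hi : ∀ z : ℂ, 0 < z.im → 0 < (f z).im)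
    (hneg : ∀ x : ℝ, x < 0 → ∃ r : ℝ, 0 < r ∧ f (x : ℂ) = (r : ℂ))
    (hsym : ∀ z ∈ SDom, conj (f z) = f (conj z)) :
    ∀ z ∈ SDom, f z ∈ slitPlane := by
  intro z hz
  rcases lt_trichotomy z.im 0 with h | h | h
  · have hcz : 0 < (conj z).im := by simpa using h
    have h2 := hi _ hcz
    rw [← hsym z hz] at h2
    have : (f z).im < 0 := by
      simpa using h2
    exact mem_slitPlane_iff.mpr (Or.inr this.ne)
  · have hre : z.re < 0 := (mem_SDom_iff.mp hz).resolve_right (by simp [h])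
    obtain ⟨r, hr, hfr⟩ := hneg z.re hre
    have hzeq : z = ((z.re : ℝ) : ℂ) := by
      apply Complex.ext <;> simp [h]
    rw [hzeq, hfr]
    exact mem_slitPlane_iff.mpr (Or.inl (by simpa using hr))
  · exact mem_slitPlane_iff.mpr (Or.inr (hi z h).ne')

set_option maxHeartbeats 1000000 in
lemma im_h_nonneg (hA : AnalyticOnNhd ℂ f SDom)
    (hi : ∀ z : ℂ, 0 < z.im → 0 < (f z).im)
    (hneg : ∀ x : ℝ, x < 0 → ∃ r : ℝ, 0 < r ∧ f (x : ℂ) = (r : ℂ))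
    (hsym : ∀ z ∈ SDom, conj (f z) = f (conj z))
    {z : ℂ} (hz : 0 < z.im) : 0 ≤ (z * f z).im := by
  have hfsl := fslit hA hi hneg hsym
  have hzS : z ∈ SDom := mem_SDom_of_im_pos hz
  have hz0 : z ≠ 0 := fun h => by simp [h] at hz
  have hnz : -z ∈ slitPlane := mem_slitPlane_iff.mpr (Or.inr (by simpa using hz.ne'))
  set w : ℂ := (-z) ^ (2⁻¹ : ℂ) with hw_def
  have hww : w * w = -z := sqrt_mul_self (neg_ne_zero.mpr hz0)
  have hwre : 0 < w.re := sqrt_re_pos hnz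
  set F : ℂ → ℂ := fun v => (f (-(v ^ 2))) ^ (2⁻¹ : ℂ) with hF_def
  have hmemv : ∀ v : ℂ, 0 < v.re → -(v ^ 2) ∈ SDom := fun v hv => neg_sq_mem_SDom hv
  have hFd : ∀ v : ℂ, 0 < v.re → AnalyticAt ℂ F v := by
    intro v hv
    have h1 : AnalyticAt ℂ (fun v : ℂ => -(v ^ 2)) v := ((analyticAt_id).pow 2).neg
    have h2 : AnalyticAt ℂ f (-(v ^ 2)) := hA _ (hmemv v hv)
    have h3 : AnalyticAt ℂ (fun v : ℂ => f (-(v ^ 2))) v := AnalyticAt.comp h2 h1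
    exact h3.cpow analyticAt_const (hfsl _ (hmemv v hv))
  have hFm : ∀ v : ℂ, 0 < v.re → 0 < (F v).re := fun v hv =>
    sqrt_re_pos (hfsl _ (hmemv v hv))
  have hFsym : F (conj w) = conj (F w) := by
    have e1 : -((conj w) ^ 2) = conj (-(w ^ 2)) := by rw [map_neg, map_pow]
    show (f (-((conj w) ^ 2))) ^ (2⁻¹ : ℂ) = conj ((f (-(w ^ 2))) ^ (2⁻¹ : ℂ))
    rw [e1, ← hsym _ (hmemv w hwre)]
    exact sqrt_conj (hfsl _ (hmemv w hwre))
  have key := halfplane_sp hFd hFm hwre hFsym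
  have hz2 : -(w ^ 2) = z := by rw [sq, hww, neg_neg]
  have hFw : F w = (f z) ^ (2⁻¹ : ℂ) := by
    show (f (-(w ^ 2))) ^ (2⁻¹ : ℂ) = _
    rw [hz2]
  have hfzsl : f z ∈ slitPlane := hfsl z hzS
  have hFF : F w * F w = f z := by rw [hFw]; exact sqrt_mul_self (slitPlane_ne_zero hfzsl)
  set p : ℝ := w.re with hp_def
  set q : ℝ := w.im with hq_def
  set r : ℝ := (F w).re with hr_def
  set s : ℝ := (F w).im with hs_def
  have himw : q < 0 := by
    have e := congrArg Complex.im hz2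
    rw [sq] at e
    simp only [Complex.neg_im, Complex.mul_im] at e
    nlinarith [hz, hwre]
  have himF : 0 < s := by
    have e := congrArg Complex.im hFF
    simp only [Complex.mul_im] at e
    have hre : 0 < r := hFm w hwre
    nlinarith [hi z hz]
  have hrF : 0 < r := hFm w hwre
  -- square the key inequality
  have hw2 : ‖w‖ * ‖w‖ = p * p + q * q := by
    rw [← sq, ← Complex.normSq_eq_norm_sq, Complex.normSq_apply]
  have hF2 : ‖F w‖ * ‖F w‖ = r * r + s * s := by
    rw [← sq, ← Complex.normSq_eq_norm_sq, Complex.normSq_apply]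
  have key2 : (|s| * ‖w‖) * (|s| * ‖w‖) ≤ (|q| * ‖F w‖) * (|q| * ‖F w‖) :=
    mul_self_le_mul_self (by positivity) key
  have habs_s : |s| = s := abs_of_pos himF
  have habs_q : |q| = -q := abs_of_neg himw
  rw [habs_s, habs_q] at key2
  have hsq : s * s * (p * p + q * q) ≤ q * q * (r * r + s * s) := by nlinarith [key2, hw2, hF2]
  have hps : p * s ≤ (-q) * r := by
    nlinarith [hsq, mul_pos hwre himF, mul_pos (neg_pos.mpr himw) hrF,
      sq_nonneg (p * s - (-q) * r), sq_nonneg (p * s + (-q) * r)]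
  have e : (z * f z).im = -(2 * ((p * r - q * s) * (p * s + q * r))) := by
    have hzf : z * f z = -((w * F w) * (w * F w)) := by
      rw [← hFF, ← hz2]; ring
    rw [hzf]
    simp only [Complex.neg_im, Complex.mul_im, Complex.mul_re]
    ring
  rw [e]
  have hfac1 : 0 < p * r - q * s := by nlinarith [mul_pos hwre hrF]
  have hfac2 : p * s + q * r ≤ 0 := by linarith
  nlinarith [mul_nonpos_of_nonneg_of_nonpos hfac1.le hfac2]

end CaseB

theorem statement1 (f : ℂ → ℂ) (hf : StieltjesClass f)
    (hne : ¬ ∀ z ∈ SDom, f z = 0) :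
    (∀ z ∈ SDom, f z ≠ 0) ∧ StieltjesClass (fun z => -1 / (z * f z)) := by
  obtain ⟨hA, hcase⟩ := hf
  rcases hcase with ⟨c, hc0, hconst⟩ | ⟨hi, hneg, hsym⟩
  · -- Case A : f is a nonnegative constant
    have hcpos : 0 < c := by
      push_neg at hne
      obtain ⟨z, hz, hfz⟩ := hne
      rcases hc0.lt_or_eq with h | h
      · exact h
      · exact absurd (by rw [hconst z hz, ← h]; simp) hfz
    have hfz : ∀ z ∈ SDom, f z ≠ 0 := fun z hz => by
      rw [hconst z hz]
      exact_mod_cast Complex.ofReal_ne_zero.mpr hcpos.ne'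
    have hzne : ∀ z ∈ SDom, z ≠ 0 := fun z hz h => zero_not_mem_SDom (h ▸ hz)
    refine ⟨hfz, ?_, Or.inr ⟨?_, ?_, ?_⟩⟩
    · intro z hz
      exact (analyticAt_const).div ((analyticAt_id).mul (hA z hz))
        (mul_ne_zero (hzne z hz) (hfz z hz))
    · intro z hz
      have hzS : z ∈ SDom := mem_SDom_of_im_pos hz
      show 0 < (-1 / (z * f z)).im
      rw [neg_one_div_im]
      apply div_pos
      · rw [hconst z hzS]
        have e : (z * (c : ℂ)).im = z.im * c := by simp [Complex.mul_im]
        rw [e]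
        exact mul_pos hz hcpos
      · exact Complex.normSq_pos.mpr (mul_ne_zero (hzne z hzS) (hfz z hzS))
    · intro x hx
      have hxS : ((x : ℝ) : ℂ) ∈ SDom := mem_SDom_iff.mpr (Or.inl (by simpa using hx))
      refine ⟨1 / ((-x) * c), by have : 0 < -x := neg_pos.mpr hx; positivity, ?_⟩
      show -1 / ((x : ℂ) * f (x : ℂ)) = _
      rw [hconst _ hxS]
      have hx0 : (x : ℂ) ≠ 0 := Complex.ofReal_ne_zero.mpr hx.ne
      have hc0' : (c : ℂ) ≠ 0 := Complex.ofReal_ne_zero.mpr hcpos.ne'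
      push_cast
      field_simp
    · intro z hz
      show conj (-1 / (z * f z)) = -1 / (conj z * f (conj z))
      rw [hconst z hz, hconst _ (conj_mem_SDom hz)]
      rw [map_div₀, map_neg, _root_.map_one, _root_.map_mul, Complex.conj_ofReal]
  · -- Case B
    have hfsl := fslit hA hi hneg hsym
    have hfz : ∀ z ∈ SDom, f z ≠ 0 := fun z hz => slitPlane_ne_zero (hfsl z hz)
    have hzne : ∀ z ∈ SDom, z ≠ 0 := fun z hz h => zero_not_mem_SDom (h ▸ hz)
    have hprod : ∀ z ∈ SDom, z * f z ≠ 0 := fun z hz =>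
      mul_ne_zero (hzne z hz) (hfz z hz)
    have hAnal : AnalyticOnNhd ℂ (fun z => -1 / (z * f z)) SDom := fun z hz =>
      (analyticAt_const).div ((analyticAt_id).mul (hA z hz)) (hprod z hz)
    have himh : ∀ z : ℂ, 0 < z.im → 0 ≤ (z * f z).im := fun z hz =>
      im_h_nonneg hA hi hneg hsym hz
    refine ⟨hfz, hAnal, ?_⟩
    by_cases hcc : ∃ z₀ : ℂ, 0 < z₀.im ∧ (z₀ * f z₀).im = 0
    · -- degenerate case : z * f z is constant
      obtain ⟨z₀, hz₀, him0⟩ := hcc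
      set U : Set ℂ := {z : ℂ | 0 < z.im} with hU
      have hUopen : IsOpen U := isOpen_lt continuous_const Complex.continuous_im
      have hUsub : U ⊆ SDom := fun z hz => mem_SDom_of_im_pos hz
      have hhA : AnalyticOnNhd ℂ (fun z => z * f z) U := fun z hz =>
        (analyticAt_id).mul (hA z (hUsub hz))
      have hpre : IsPreconnected U := (convex_halfSpace_im_gt 0).isPreconnected
      have hz₀U : z₀ ∈ U := hz₀
      rcases hhA.is_constant_or_isOpen hpre with ⟨cc, hccst⟩ | hopen
      · -- constant on U
        have hccim : cc.im = 0 := by rw [← hccst z₀ hz₀U]; exact him0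
        have hccconj : conj cc = cc := Complex.conj_eq_iff_im.mpr hccim
        have hext : ∀ z ∈ SDom, z * f z = cc := by
          intro z hz
          rcases lt_trichotomy z.im 0 with h | h | h
          · have hconjU : conj z ∈ U := by
              show 0 < (conj z).im
              simpa using h
            have h2 : conj (z * f z) = cc := by
              rw [_root_.map_mul, hsym z hz]
              exact hccst _ hconjU
            calc z * f z = conj (conj (z * f z)) := by rw [Complex.conj_conj]
              _ = conj cc := by rw [h2]
              _ = cc := hccconj
          · have hcont : ContinuousAt (fun z => z * f z) z :=
              ((analyticAt_id).mul (hA z hz)).continuousAt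
            have t0 : Continuous (fun t : ℝ => z + (t : ℂ) * Complex.I) := by continuity
            have t1 : Filter.Tendsto (fun t : ℝ => z + (t : ℂ) * Complex.I)
                (nhdsWithin 0 (Set.Ioi 0)) (nhds z) := by
              have h0 := t0.tendsto 0
              rw [show z + ((0 : ℝ) : ℂ) * Complex.I = z by simp] at h0
              exact h0.mono_left nhdsWithin_le_nhds
            have t2 : Filter.Tendsto
                (fun t : ℝ => (z + (t : ℂ) * Complex.I) * f (z + (t : ℂ) * Complex.I))
                (nhdsWithin 0 (Set.Ioi 0)) (nhds (z * f z)) := hcont.tendsto.comp t1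
            have t3 : Filter.Tendsto
                (fun t : ℝ => (z + (t : ℂ) * Complex.I) * f (z + (t : ℂ) * Complex.I))
                (nhdsWithin 0 (Set.Ioi 0)) (nhds cc) := by
              apply Filter.Tendsto.congr' _ tendsto_const_nhds
              filter_upwards [self_mem_nhdsWithin] with t ht
              have htU : z + (t : ℂ) * Complex.I ∈ U := by
                show 0 < (z + (t : ℂ) * Complex.I).im
                simp [h]
                exact ht
              exact (hccst _ htU).symm
            exact tendsto_nhds_unique t2 t3
          · exact hccst z h
        obtain ⟨r, hr, hfr⟩ := hneg (-1) (by norm_num)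
        have hm1 : ((-1 : ℝ) : ℂ) ∈ SDom := mem_SDom_iff.mpr (Or.inl (by norm_num))
        have hcceq : cc = -(r : ℂ) := by
          rw [← hext _ hm1, hfr]
          push_cast
          ring
        left
        refine ⟨1 / r, by positivity, ?_⟩
        intro z hz
        show -1 / (z * f z) = _
        rw [hext z hz, hcceq]
        have hr0 : (r : ℂ) ≠ 0 := Complex.ofReal_ne_zero.mpr hr.ne'
        push_cast
        field_simp
      · -- open case : contradiction
        exfalso
        have himg : IsOpen ((fun z => z * f z) '' U) := hopen U subset_rfl hUopen
        have hmem : z₀ * f z₀ ∈ (fun z => z * f z) '' U := ⟨z₀, hz₀U, rfl⟩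
        obtain ⟨ε, hε, hball⟩ := Metric.isOpen_iff.mp himg _ hmem
        have hpt : (z₀ * f z₀) - ((ε / 2 : ℝ) : ℂ) * Complex.I ∈ Metric.ball (z₀ * f z₀) ε := by
          rw [Metric.mem_ball, dist_eq_norm]
          have : z₀ * f z₀ - ((ε / 2 : ℝ) : ℂ) * Complex.I - z₀ * f z₀
              = -(((ε / 2 : ℝ) : ℂ) * Complex.I) := by ring
          rw [this, norm_neg, norm_mul, Complex.norm_real, Complex.norm_I, mul_one, Real.norm_eq_abs]
          rw [abs_of_pos (by positivity)]
          linarith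
        obtain ⟨z₁, hz₁U, hz₁⟩ := hball hpt
        have hz₁' : z₁ * f z₁ = z₀ * f z₀ - ((ε / 2 : ℝ) : ℂ) * Complex.I := hz₁
        have hge := himh z₁ hz₁U
        have : (z₁ * f z₁).im = -(ε / 2) := by
          rw [hz₁']
          simp [Complex.sub_im, him0]
        rw [this] at hge
        linarith
    · -- strict case
      push_neg at hcc
      have hstrict : ∀ z : ℂ, 0 < z.im → 0 < (z * f z).im := fun z hz =>
        lt_of_le_of_ne (himh z hz) (Ne.symm (hcc z hz))
      refine Or.inr ⟨?_, ?_, ?_⟩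
      · intro z hz
        show 0 < (-1 / (z * f z)).im
        rw [neg_one_div_im]
        exact div_pos (hstrict z hz)
          (Complex.normSq_pos.mpr (hprod z (mem_SDom_of_im_pos hz)))
      · intro x hx
        have hxS : ((x : ℝ) : ℂ) ∈ SDom := mem_SDom_iff.mpr (Or.inl (by simpa using hx))
        obtain ⟨r, hr, hfr⟩ := hneg x hx
        refine ⟨1 / ((-x) * r), by have : 0 < -x := neg_pos.mpr hx; positivity, ?_⟩
        show -1 / ((x : ℂ) * f (x : ℂ)) = _
        rw [hfr]
        have hx0 : (x : ℂ) ≠ 0 := Complex.ofReal_ne_zero.mpr hx.ne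
        have hr0 : (r : ℂ) ≠ 0 := Complex.ofReal_ne_zero.mpr hr.ne'
        push_cast
        field_simp
      · intro z hz
        show conj (-1 / (z * f z)) = -1 / (conj z * f (conj z))
        rw [map_div₀, map_neg, _root_.map_one, _root_.map_mul, hsym z hz]
end
end

section
/- Let z₁, z₂ be distinct points of ℍ₊ and let f have a Stieltjes spectral representation with constant γ ≥ 0 and measure σ. If the 2×2 Nevanlinna–Pick matrix N((z₁,z₂),(f(z₁),f(z₂))) with entries N_{jk} = (f(z_j) − conj(f(z_k)))/(z_j − conj(z_k)) has determinant zero, then there exist t₀ ≥ 0 and s ≥ 0 such that f(z) = γ + s/(t₀ − z) for all z ∈ ℂ ∖ [0,∞); that is, the measure σ is supported on a single point. -/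
open Complex MeasureTheory Polynomial Matrix
open scoped ComplexConjugate

noncomputable section

/-- `f` has a Stieltjes spectral representation with constant `γ ≥ 0` and positive Borel
measure `σ` supported on `[0,∞)` with `∫ (1+t)⁻¹ dσ < ∞`. -/
def IsStieltjesRep (f : ℂ → ℂ) (γ : ℝ) (σ : Measure ℝ) : Prop :=
  0 ≤ γ ∧ σ (Set.Iio 0) = 0 ∧
  (∫⁻ t, ENNReal.ofReal ((1 + t)⁻¹) ∂σ) < ⊤ ∧
  ∀ z ∈ SDom, f z = (γ : ℂ) + ∫ t, ((t : ℂ) - z)⁻¹ ∂σ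

/-- nonzero denominators -/
lemma sub_ne_zero_of_im (z : ℂ) (hz : z.im ≠ 0) (t : ℝ) : ((t:ℂ) - z) ≠ 0 := by
  intro h; apply hz; have := congrArg Complex.im h; simpa using this.symm

/-- The basic norm bound `‖(t - z)⁻¹‖ ≤ C (1+t)⁻¹` on `t ≥ 0`. -/
lemma norm_inv_bound (z : ℂ) (hz : z.im ≠ 0) :
    ∃ C : ℝ, 0 < C ∧ ∀ t : ℝ, 0 ≤ t → ‖((t:ℂ) - z)⁻¹‖ ≤ C * (1 + t)⁻¹ := by
  set m := |z.im| with hm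
  have him : 0 < m := abs_pos.mpr hz
  refine ⟨max 2 ((2*‖z‖+2)/m), lt_of_lt_of_le two_pos (le_max_left _ _), ?_⟩
  set C := max 2 ((2*‖z‖+2)/m) with hC
  intro t ht
  have h1t : (0:ℝ) < 1 + t := by linarith
  have hmlb : m ≤ ‖(t:ℂ) - z‖ := by
    have h1 : |((t:ℂ) - z).im| ≤ ‖(t:ℂ) - z‖ := Complex.abs_im_le_norm _
    simpa using h1
  have hpos : 0 < ‖(t:ℂ) - z‖ := lt_of_lt_of_le him hmlb
  have hCpos : 0 < C := lt_of_lt_of_le two_pos (le_max_left _ _)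
  have key : 1 + t ≤ C * ‖(t:ℂ) - z‖ := by
    rcases le_or_gt t (2*‖z‖+1) with hcase | hcase
    · have hCge : (2*‖z‖+2)/m ≤ C := le_max_right _ _
      have : ((2*‖z‖+2)/m) * m = 2*‖z‖+2 := by field_simp
      nlinarith [norm_nonneg z, mul_le_mul hCge hmlb him.le hCpos.le]
    · have hlow : t - ‖z‖ ≤ ‖(t:ℂ) - z‖ := by
        have h1 : ‖(t:ℂ)‖ - ‖z‖ ≤ ‖(t:ℂ) - z‖ := norm_sub_norm_le _ _
        have h2 : ‖(t:ℂ)‖ = t := by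
          rw [Complex.norm_real, Real.norm_eq_abs, _root_.abs_of_nonneg ht]
        linarith
      have hC2 : (2:ℝ) ≤ C := le_max_left _ _
      nlinarith [norm_nonneg z]
  rw [norm_inv, ← one_div, ← div_eq_mul_inv, div_le_div_iff₀ hpos h1t, one_mul]
  exact key

lemma integrable_of_bound (σ : Measure ℝ) (hσ0 : σ (Set.Iio 0) = 0)
    (hfin : (∫⁻ t, ENNReal.ofReal ((1 + t)⁻¹) ∂σ) < ⊤)
    (F : ℝ → ℂ) (hm : AEStronglyMeasurable F σ) (C : ℝ) (hC : 0 ≤ C)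
    (hb : ∀ t : ℝ, 0 ≤ t → ‖F t‖ ≤ C * (1 + t)⁻¹) : Integrable F σ := by
  have hae : ∀ᵐ t ∂σ, 0 ≤ t := by
    rw [ae_iff]
    have : {t : ℝ | ¬ 0 ≤ t} = Set.Iio 0 := by ext t; simp [not_le]
    rw [this]; exact hσ0
  refine ⟨hm, ?_⟩
  rw [hasFiniteIntegral_iff_norm]
  calc ∫⁻ t, ENNReal.ofReal ‖F t‖ ∂σ ≤ ∫⁻ t, ENNReal.ofReal C * ENNReal.ofReal ((1 + t)⁻¹) ∂σ := by
        refine lintegral_mono_ae (hae.mono fun t ht => ?_)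
        rw [← ENNReal.ofReal_mul hC]
        exact ENNReal.ofReal_le_ofReal (hb t ht)
    _ = ENNReal.ofReal C * ∫⁻ t, ENNReal.ofReal ((1 + t)⁻¹) ∂σ := lintegral_const_mul' _ _ ENNReal.ofReal_ne_top
    _ < ⊤ := ENNReal.mul_lt_top ENNReal.ofReal_lt_top hfin

lemma meas_g (z : ℂ) : Measurable (fun t : ℝ => ((t:ℂ) - z)⁻¹) :=
  ((Complex.measurable_ofReal.sub measurable_const).inv)

lemma integrable_g (σ : Measure ℝ) (hσ0 : σ (Set.Iio 0) = 0)
    (hfin : (∫⁻ t, ENNReal.ofReal ((1 + t)⁻¹) ∂σ) < ⊤)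
    (z : ℂ) (hz : z.im ≠ 0) : Integrable (fun t : ℝ => ((t:ℂ) - z)⁻¹) σ := by
  obtain ⟨C, hC, hb⟩ := norm_inv_bound z hz
  exact integrable_of_bound σ hσ0 hfin _ (meas_g z).aestronglyMeasurable C hC.le hb

lemma integrable_gg (σ : Measure ℝ) (hσ0 : σ (Set.Iio 0) = 0)
    (hfin : (∫⁻ t, ENNReal.ofReal ((1 + t)⁻¹) ∂σ) < ⊤)
    (z w : ℂ) (hz : z.im ≠ 0) (hw : w.im ≠ 0) :
    Integrable (fun t : ℝ => ((t:ℂ) - z)⁻¹ * conj (((t:ℂ) - w)⁻¹)) σ := by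
  obtain ⟨C, hC, hb⟩ := norm_inv_bound z hz
  obtain ⟨D, hD, hb'⟩ := norm_inv_bound w hw
  have hmeas : Measurable (fun t : ℝ => ((t:ℂ) - z)⁻¹ * conj (((t:ℂ) - w)⁻¹)) :=
    (meas_g z).mul (continuous_conj.measurable.comp (meas_g w))
  refine integrable_of_bound σ hσ0 hfin _ hmeas.aestronglyMeasurable (C * D)
    (by positivity) (fun t ht => ?_)
  have h1t : (0:ℝ) < 1 + t := by linarith
  have hle1 : (1 + t)⁻¹ ≤ 1 := by
    rw [inv_le_one_iff₀]; right; linarith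
  calc ‖((t:ℂ) - z)⁻¹ * conj (((t:ℂ) - w)⁻¹)‖
      = ‖((t:ℂ) - z)⁻¹‖ * ‖((t:ℂ) - w)⁻¹‖ := by rw [norm_mul, RCLike.norm_conj]
    _ ≤ (C * (1 + t)⁻¹) * (D * (1 + t)⁻¹) :=
        mul_le_mul (hb t ht) (hb' t ht) (norm_nonneg _) (by positivity)
    _ = (C * D) * (1 + t)⁻¹ * (1 + t)⁻¹ := by ring
    _ ≤ (C * D) * (1 + t)⁻¹ * 1 :=
        mul_le_mul_of_nonneg_left hle1 (by positivity)
    _ = (C * D) * (1 + t)⁻¹ := by ring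

/-- upper half plane points are in the slit domain -/
lemma mem_SDom_of_im_ne (z : ℂ) (hz : z.im ≠ 0) : z ∈ SDom := fun h => hz h.2

/-- conclusion helper -/
lemma conclude (f : ℂ → ℂ) (γ : ℝ) (σ : Measure ℝ) (hrep : IsStieltjesRep f γ σ)
    (t₀ : ℝ) (ht₀ : 0 ≤ t₀) (hnull : σ ({t₀}ᶜ) = 0) :
    ∃ t₀ s : ℝ, 0 ≤ t₀ ∧ 0 ≤ s ∧
      ∀ z ∈ SDom, f z = (γ : ℂ) + (s : ℂ) / ((t₀ : ℂ) - z) := by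
  obtain ⟨hγ, hσ0, hfin, hf⟩ := hrep
  have huniv : σ Set.univ = σ {t₀} := by
    refine le_antisymm ?_ (measure_mono (Set.subset_univ _))
    calc σ Set.univ = σ ({t₀} ∪ {t₀}ᶜ) := by rw [Set.union_compl_self]
      _ ≤ σ {t₀} + σ ({t₀}ᶜ) := measure_union_le _ _
      _ = σ {t₀} := by rw [hnull, add_zero]
  have hsingle_lt : σ {t₀} < ⊤ := by
    have h1 : ∫⁻ t in {t₀}, ENNReal.ofReal ((1 + t)⁻¹) ∂σ ≤ ∫⁻ t, ENNReal.ofReal ((1 + t)⁻¹) ∂σ :=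
      setLIntegral_le_lintegral _ _
    rw [lintegral_singleton] at h1
    have h2 : ENNReal.ofReal ((1 + t₀)⁻¹) * σ {t₀} < ⊤ := lt_of_le_of_lt h1 hfin
    have hne0 : ENNReal.ofReal ((1 + t₀)⁻¹) ≠ 0 := by
      rw [ne_eq, ENNReal.ofReal_eq_zero, not_le]
      positivity
    by_contra htop
    rw [not_lt, top_le_iff] at htop
    rw [htop, ENNReal.mul_top hne0] at h2
    exact absurd h2 (by simp)
  refine ⟨t₀, (σ {t₀}).toReal, ht₀, ENNReal.toReal_nonneg, fun z hz => ?_⟩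
  rw [hf z hz]
  congr 1
  have haet : ∀ᵐ t ∂σ, t = t₀ := by
    rw [ae_iff]
    exact measure_mono_null (fun t ht => ht) hnull
  have : ∫ t, ((t:ℂ) - z)⁻¹ ∂σ = ∫ _t, ((t₀:ℂ) - z)⁻¹ ∂σ :=
    integral_congr_ae (haet.mono fun t ht => by rw [ht])
  rw [this, integral_const, Measure.real, huniv, real_smul, div_eq_mul_inv]

lemma zero_measure_case (f : ℂ → ℂ) (γ : ℝ) (σ : Measure ℝ) (hrep : IsStieltjesRep f γ σ)
    (hzero : σ Set.univ = 0) :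
    ∃ t₀ s : ℝ, 0 ≤ t₀ ∧ 0 ≤ s ∧
      ∀ z ∈ SDom, f z = (γ : ℂ) + (s : ℂ) / ((t₀ : ℂ) - z) := by
  exact conclude f γ σ hrep 0 le_rfl (measure_mono_null (Set.subset_univ _) hzero)

theorem statement5 (z₁ z₂ : ℂ) (h₁ : 0 < z₁.im) (h₂ : 0 < z₂.im) (hne : z₁ ≠ z₂)
    (f : ℂ → ℂ) (γ : ℝ) (σ : Measure ℝ) (hrep : IsStieltjesRep f γ σ)
    (hdet : Matrix.det
      !![(f z₁ - conj (f z₁)) / (z₁ - conj z₁), (f z₁ - conj (f z₂)) / (z₁ - conj z₂);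
         (f z₂ - conj (f z₁)) / (z₂ - conj z₁), (f z₂ - conj (f z₂)) / (z₂ - conj z₂)] = 0) :
    ∃ t₀ s : ℝ, 0 ≤ t₀ ∧ 0 ≤ s ∧
      ∀ z ∈ SDom, f z = (γ : ℂ) + (s : ℂ) / ((t₀ : ℂ) - z) := by
  obtain ⟨hγ, hσ0, hfin, hf⟩ := hrep
  have hrep' : IsStieltjesRep f γ σ := ⟨hγ, hσ0, hfin, hf⟩
  -- the entry formula
  have entry : ∀ z w : ℂ, 0 < z.im → 0 < w.im →
      (f z - conj (f w)) / (z - conj w) =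
        ∫ t, ((t:ℂ) - z)⁻¹ * conj (((t:ℂ) - w)⁻¹) ∂σ := by
    intro z w hz hw
    have hz' : z.im ≠ 0 := ne_of_gt hz
    have hw' : w.im ≠ 0 := ne_of_gt hw
    have hwc' : (conj w).im ≠ 0 := by simp [ne_of_gt hw]
    have hzw : z - conj w ≠ 0 := by
      intro h
      have := congrArg Complex.im h
      simp at this
      linarith
    have hfz : f z = (γ:ℂ) + ∫ t, ((t:ℂ) - z)⁻¹ ∂σ := hf z (mem_SDom_of_im_ne z hz')
    have hfw : conj (f w) = (γ:ℂ) + ∫ t, ((t:ℂ) - conj w)⁻¹ ∂σ := by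
      rw [hf w (mem_SDom_of_im_ne w hw'), map_add, Complex.conj_ofReal, ← integral_conj]
      congr 1
      refine integral_congr_ae (Filter.Eventually.of_forall fun t => ?_)
      simp [map_inv₀, map_sub, Complex.conj_ofReal]
    have hint1 : Integrable (fun t : ℝ => ((t:ℂ) - z)⁻¹) σ := integrable_g σ hσ0 hfin z hz'
    have hint2 : Integrable (fun t : ℝ => ((t:ℂ) - conj w)⁻¹) σ := integrable_g σ hσ0 hfin _ hwc'
    have key : f z - conj (f w) = (z - conj w) * ∫ t, ((t:ℂ) - z)⁻¹ * conj (((t:ℂ) - w)⁻¹) ∂σ := by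
      rw [hfz, hfw]
      have : ((γ:ℂ) + ∫ t, ((t:ℂ) - z)⁻¹ ∂σ) - ((γ:ℂ) + ∫ t, ((t:ℂ) - conj w)⁻¹ ∂σ)
          = ∫ t, (((t:ℂ) - z)⁻¹ - ((t:ℂ) - conj w)⁻¹) ∂σ := by
        rw [integral_sub hint1 hint2]; ring
      rw [this, ← integral_const_mul]
      refine integral_congr_ae (Filter.Eventually.of_forall fun t => ?_)
      have haz : ((t:ℂ) - z) ≠ 0 := sub_ne_zero_of_im z hz' t
      have hbw : ((t:ℂ) - conj w) ≠ 0 := sub_ne_zero_of_im _ hwc' t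
      show ((t:ℂ) - z)⁻¹ - ((t:ℂ) - conj w)⁻¹ = (z - conj w) * (((t:ℂ) - z)⁻¹ * conj (((t:ℂ) - w)⁻¹))
      rw [map_inv₀, map_sub, Complex.conj_ofReal]
      field_simp
      ring
    rw [key]
    exact mul_div_cancel_left₀ _ hzw
  set g₁ : ℝ → ℂ := fun t => ((t:ℂ) - z₁)⁻¹ with hg₁
  set g₂ : ℝ → ℂ := fun t => ((t:ℂ) - z₂)⁻¹ with hg₂
  have h₁' : z₁.im ≠ 0 := ne_of_gt h₁
  have h₂' : z₂.im ≠ 0 := ne_of_gt h₂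
  set A : ℂ := ∫ t, g₁ t * conj (g₁ t) ∂σ with hA
  set B : ℂ := ∫ t, g₁ t * conj (g₂ t) ∂σ with hB
  set Cc : ℂ := ∫ t, g₂ t * conj (g₂ t) ∂σ with hCc
  have hI11 := integrable_gg σ hσ0 hfin z₁ z₁ h₁' h₁'
  have hI12 := integrable_gg σ hσ0 hfin z₁ z₂ h₁' h₂'
  have hI21 := integrable_gg σ hσ0 hfin z₂ z₁ h₂' h₁'
  have hI22 := integrable_gg σ hσ0 hfin z₂ z₂ h₂' h₂'
  have hE21 : (∫ t, g₂ t * conj (g₁ t) ∂σ) = conj B := by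
    rw [hB, ← integral_conj]
    refine integral_congr_ae (Filter.Eventually.of_forall fun t => ?_)
    simp only [_root_.map_mul, Complex.conj_conj]
    ring
  -- rewrite determinant
  have hdet' : A * Cc - B * conj B = 0 := by
    rw [Matrix.det_fin_two_of] at hdet
    rw [entry z₁ z₁ h₁ h₁, entry z₂ z₂ h₂ h₂, entry z₁ z₂ h₁ h₂, entry z₂ z₁ h₂ h₁] at hdet
    rw [hE21] at hdet
    rw [hA, hCc, hB]
    linear_combination hdet
  -- A and Cc are real
  have hmc : ∀ (g : ℝ → ℂ), (fun t => g t * conj (g t)) = fun t => ((‖g t‖^2 : ℝ) : ℂ) := by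
    intro g; funext t
    rw [Complex.mul_conj]; norm_cast; exact (Complex.normSq_eq_norm_sq _).trans rfl
  have hAre : A = ((∫ t, ‖g₁ t‖^2 ∂σ : ℝ) : ℂ) := by rw [hA, hmc g₁]; exact integral_ofReal
  have hCre : Cc = ((∫ t, ‖g₂ t‖^2 ∂σ : ℝ) : ℂ) := by rw [hCc, hmc g₂]; exact integral_ofReal
  -- helper: from ∫ ‖F‖² = 0, F =ᵐ 0
  have sq_zero : ∀ (F : ℝ → ℂ), Integrable (fun t => F t * conj (F t)) σ →
      (∫ t, ‖F t‖^2 ∂σ) = 0 → ∀ᵐ t ∂σ, F t = 0 := by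
    intro F hFi hF0
    have hInt : Integrable (fun t => ‖F t‖^2) σ := by
      have := hFi.re
      refine this.congr (Filter.Eventually.of_forall fun t => ?_)
      show RCLike.re (F t * conj (F t)) = ‖F t‖^2
      rw [Complex.mul_conj]
      simp [Complex.normSq_eq_norm_sq, ← Complex.ofReal_pow]
    have := (integral_eq_zero_iff_of_nonneg (fun t => sq_nonneg ‖F t‖) hInt).mp hF0
    refine this.mono fun t ht => ?_
    simpa [pow_eq_zero_iff] using ht
  -- case A = 0
  rcases eq_or_ne (∫ t, ‖g₁ t‖^2 ∂σ) 0 with hA0 | hA0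
  · have hg0 : ∀ᵐ t ∂σ, g₁ t = 0 := sq_zero g₁ hI11 hA0
    have : σ Set.univ = 0 := by
      have h := hg0
      rw [ae_iff] at h
      have huniv : {t : ℝ | ¬ g₁ t = 0} = Set.univ := by
        ext t
        simp only [Set.mem_setOf_eq, Set.mem_univ, iff_true]
        exact inv_ne_zero (sub_ne_zero_of_im z₁ h₁' t)
      rwa [huniv] at h
    exact zero_measure_case f γ σ hrep' this
  · -- A ≠ 0
    have hAne : A ≠ 0 := by
      rw [hAre]; exact_mod_cast hA0
    have hAconj : conj A = A := by rw [hAre, Complex.conj_ofReal]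
    set h : ℝ → ℂ := fun t => conj B * g₁ t - A * g₂ t with hh
    have hIh : Integrable (fun t => h t * conj (h t)) σ := by
      have e : (fun t => h t * conj (h t)) =
          fun t => (conj B * B) * (g₁ t * conj (g₁ t)) - (conj B * conj A) * (g₁ t * conj (g₂ t))
            - (A * B) * (g₂ t * conj (g₁ t)) + (A * conj A) * (g₂ t * conj (g₂ t)) := by
        funext t
        simp only [hh, map_sub, _root_.map_mul, Complex.conj_conj]
        ring
      rw [e]
      exact (((hI11.const_mul _).sub (hI12.const_mul _)).sub (hI21.const_mul _)).add (hI22.const_mul _)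
    have hint0 : (∫ t, h t * conj (h t) ∂σ) = 0 := by
      have e : (fun t => h t * conj (h t)) =
          fun t => (conj B * B) * (g₁ t * conj (g₁ t)) - (conj B * conj A) * (g₁ t * conj (g₂ t))
            - (A * B) * (g₂ t * conj (g₁ t)) + (A * conj A) * (g₂ t * conj (g₂ t)) := by
        funext t
        simp only [hh, map_sub, _root_.map_mul, Complex.conj_conj]
        ring
      have J1 : Integrable (fun t => (conj B * B) * (g₁ t * conj (g₁ t))) σ := hI11.const_mul _
      have J2 : Integrable (fun t => (conj B * conj A) * (g₁ t * conj (g₂ t))) σ := hI12.const_mul _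
      have J3 : Integrable (fun t => (A * B) * (g₂ t * conj (g₁ t))) σ := hI21.const_mul _
      have J4 : Integrable (fun t => (A * conj A) * (g₂ t * conj (g₂ t))) σ := hI22.const_mul _
      have J12 : Integrable (fun t => (conj B * B) * (g₁ t * conj (g₁ t))
          - (conj B * conj A) * (g₁ t * conj (g₂ t))) σ := J1.sub J2
      have J123 : Integrable (fun t => ((conj B * B) * (g₁ t * conj (g₁ t))
          - (conj B * conj A) * (g₁ t * conj (g₂ t))) - (A * B) * (g₂ t * conj (g₁ t))) σ := J12.sub J3
      rw [e]
      rw [integral_add J123 J4, integral_sub J12 J3, integral_sub J1 J2,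
        integral_const_mul, integral_const_mul, integral_const_mul, integral_const_mul]
      rw [hE21, ← hA, ← hB, ← hCc, hAconj]
      linear_combination A * hdet'
    have hsq0 : (∫ t, ‖h t‖^2 ∂σ) = 0 := by
      have : (∫ t, h t * conj (h t) ∂σ) = ((∫ t, ‖h t‖^2 ∂σ : ℝ) : ℂ) := by
        rw [hmc h]; exact integral_ofReal
      rw [this] at hint0
      exact_mod_cast hint0
    have hh0 : ∀ᵐ t ∂σ, h t = 0 := sq_zero h hIh hsq0
    -- the zero set of h is a subsingleton
    have hroot : ∀ t : ℝ, h t = 0 → (conj B - A) * t = conj B * z₂ - A * z₁ := by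
      intro t ht
      have haz : ((t:ℂ) - z₁) ≠ 0 := sub_ne_zero_of_im z₁ h₁' t
      have hbz : ((t:ℂ) - z₂) ≠ 0 := sub_ne_zero_of_im z₂ h₂' t
      have : conj B * ((t:ℂ) - z₁)⁻¹ = A * ((t:ℂ) - z₂)⁻¹ := by
        have := sub_eq_zero.mp ht
        exact this
      have hcross : conj B * ((t:ℂ) - z₂) = A * ((t:ℂ) - z₁) := by
        have h6 := this
        field_simp at h6
        linear_combination h6
      linear_combination hcross
    have hsub : Set.Subsingleton {t : ℝ | h t = 0} := by
      intro t ht t' ht'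
      have e1 := hroot t ht
      have e2 := hroot t' ht'
      rcases eq_or_ne (conj B - A) 0 with hBA | hBA
      · exfalso
        have hBeq : conj B = A := by linear_combination hBA
        have haz : ((t:ℂ) - z₁) ≠ 0 := sub_ne_zero_of_im z₁ h₁' t
        have hbz : ((t:ℂ) - z₂) ≠ 0 := sub_ne_zero_of_im z₂ h₂' t
        have : conj B * ((t:ℂ) - z₁)⁻¹ = A * ((t:ℂ) - z₂)⁻¹ := sub_eq_zero.mp ht
        rw [hBeq] at this
        have h3 : ((t:ℂ) - z₁)⁻¹ = ((t:ℂ) - z₂)⁻¹ := mul_left_cancel₀ hAne this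
        have h4 : ((t:ℂ) - z₁) = ((t:ℂ) - z₂) := by
          rw [← inv_inv ((t:ℂ) - z₁), h3, inv_inv]
        apply hne
        linear_combination -h4
      · have : ((t:ℝ):ℂ) = ((t':ℝ):ℂ) := by
          have := e1.trans e2.symm
          exact mul_left_cancel₀ hBA this
        exact_mod_cast this
    have hZc : σ ({t : ℝ | h t = 0}ᶜ) = 0 := by
      rw [ae_iff] at hh0
      rw [Set.compl_setOf]
      exact hh0
    rcases hsub.eq_empty_or_singleton with hZ | ⟨t₀, hZ⟩
    · refine zero_measure_case f γ σ hrep' ?_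
      have : ({t : ℝ | h t = 0}ᶜ) = Set.univ := by rw [hZ]; simp
      rwa [this] at hZc
    · rw [hZ] at hZc
      rcases le_or_gt 0 t₀ with ht₀ | ht₀
      · exact conclude f γ σ hrep' t₀ ht₀ hZc
      · refine zero_measure_case f γ σ hrep' ?_
        have h5 : σ {t₀} ≤ σ (Set.Iio 0) := measure_mono (by
          intro x hx; rw [Set.mem_singleton_iff] at hx; rw [hx]; exact ht₀)
        have hle : σ Set.univ ≤ 0 := by
          calc σ Set.univ = σ ({t₀} ∪ {t₀}ᶜ) := by rw [Set.union_compl_self]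
            _ ≤ σ {t₀} + σ ({t₀}ᶜ) := measure_union_le _ _
            _ = 0 := by rw [hZc, add_zero]; exact le_antisymm (h5.trans_eq hσ0) zero_le
        exact le_antisymm hle zero_le
end
end
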